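/- arXiv:2212.07713 — 7 statements merged into one kernel-verified Lean document; each statement's English description precedes it below -/
import Mathlib

section
/- Let g be a balanced n-variable Boolean function, b ∈ F_2, let g_b be the (n+1)-variable Boolean function g_b(X_{n+1}, X_n, …, X_1) = (1 ⊕ X_{n+1})·g(X_n, …, X_1) ⊕ X_{n+1}·(b ⊕ g(1⊕X_n, …, 1⊕X_1)), and let G_b = g_b ⋄ g (an n(n+1)-variable Boolean function). Then H_∞(G_b)/Inf(G_b) = (min over those i ∈ {0, …, n+1} with a_i > 0 of (−log₂(a_i) + i·H_∞(g))) / (Inf(g)·(Inf(g) + ε_b(g))), where a_i = max_{w ∈ F_2^{n+1}, wt(w) = i} W_{g_b}(w)² and ε_b(g) = Σ_{α ∈ F_2^n : wt(α) ≢ b (mod 2)} W_g(α)². -/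
open Finset

/-- Interpret a bit as a natural number. -/
def b2n (b : Bool) : ℕ := if b then 1 else 0

/-- Hamming weight of a vector in `F_2^ι`. -/
def bwt {ι : Type*} [Fintype ι] (α : ι → Bool) : ℕ :=
  (Finset.univ.filter fun i => α i = true).card

/-- Inner product `⟨v,w⟩ = v_1 w_1 ⊕ ⋯ ⊕ v_n w_n` over `F_2`. -/
def bip {ι : Type*} [Fintype ι] (v w : ι → Bool) : Bool :=
  decide ((∑ i, b2n (v i && w i)) % 2 = 1)

/-- Normalised Walsh transform of a Boolean function:
`W_f(α) = 2^{-n} Σ_x (-1)^{f(x) ⊕ ⟨x,α⟩}`. -/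
noncomputable def walsh {ι : Type*} [Fintype ι] [DecidableEq ι]
    (f : (ι → Bool) → Bool) (α : ι → Bool) : ℝ :=
  (2 ^ Fintype.card ι : ℝ)⁻¹ *
    ∑ x : ι → Bool, (-1 : ℝ) ^ (b2n (f x) + ∑ i, b2n (x i && α i))

/-- Fourier min-entropy `H_∞(f) = min_{α : W_f(α) ≠ 0} log₂ (1 / W_f(α)²)`. -/
noncomputable def minEntropy {ι : Type*} [Fintype ι] [DecidableEq ι]
    (f : (ι → Bool) → Bool) : ℝ :=
  sInf {y : ℝ | ∃ α : ι → Bool, walsh f α ≠ 0 ∧ y = Real.logb 2 (1 / (walsh f α) ^ 2)}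

/-- Fourier entropy `H(f) = Σ_{α : W_f(α) ≠ 0} W_f(α)² log₂ (1 / W_f(α)²)`. -/
noncomputable def fourierEntropy {ι : Type*} [Fintype ι] [DecidableEq ι]
    (f : (ι → Bool) → Bool) : ℝ :=
  ∑ α : ι → Bool,
    if walsh f α = 0 then 0
    else (walsh f α) ^ 2 * Real.logb 2 (1 / (walsh f α) ^ 2)

/-- Total influence `Inf(f) = Σ_i Pr_x [f(x) ≠ f(x ⊕ e_i)]`. -/
noncomputable def influence {ι : Type*} [Fintype ι] [DecidableEq ι]
    (f : (ι → Bool) → Bool) : ℝ :=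
  ∑ i : ι,
    ((Finset.univ.filter fun x : ι → Bool =>
       f x ≠ f (Function.update x i (!x i))).card : ℝ) / 2 ^ Fintype.card ι

/-- `f` is balanced if `|supp(f)| = 2^{n-1}`. -/
def balanced {ι : Type*} [Fintype ι] [DecidableEq ι] (f : (ι → Bool) → Bool) : Prop :=
  (Finset.univ.filter fun x : ι → Bool => f x = true).card = 2 ^ (Fintype.card ι - 1)

/-- Disjoint composition `(f ⋄ g)(x) = f(g(x^{(1)}), …, g(x^{(k)}))`, where the input in
`F_2^{k·l}` is viewed as `k` blocks of length `l`. -/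
def disjComp {ι κ : Type*} (f : (ι → Bool) → Bool) (g : (κ → Bool) → Bool) :
    (ι × κ → Bool) → Bool :=
  fun x => f fun i => g fun j => x (i, j)

/-- The palindromic-type construction
`g_b(X_{n+1}, X_n, …, X_1) = (1 ⊕ X_{n+1})·g(X_n,…,X_1) ⊕ X_{n+1}·(b ⊕ g(1⊕X_n,…,1⊕X_1))`,
where the extra variable `X_{n+1}` is placed at index `0`. -/
def palin {n : ℕ} (g : (Fin n → Bool) → Bool) (b : Bool) :
    (Fin (n + 1) → Bool) → Bool :=
  fun x => if x 0 = true then xor b (g fun i => !x i.succ) else g fun i => x i.succ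

/-- `ε_b(g) = Σ_{α : wt(α) ≢ b (mod 2)} W_g(α)²`. -/
noncomputable def eps {n : ℕ} (g : (Fin n → Bool) → Bool) (b : Bool) : ℝ :=
  ∑ α ∈ Finset.univ.filter fun α : Fin n → Bool => ¬bwt α % 2 = b2n b, (walsh g α) ^ 2

/-- `f` is `t`-resilient if `W_f(α) = 0` whenever `wt(α) ≤ t`. -/
def resilient {ι : Type*} [Fintype ι] [DecidableEq ι]
    (f : (ι → Bool) → Bool) (t : ℕ) : Prop :=
  ∀ α : ι → Bool, bwt α ≤ t → walsh f α = 0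

/-- `f` is plateaued if its Walsh transform takes values in `{0, c, -c}` for some `c`. -/
def plateaued {ι : Type*} [Fintype ι] [DecidableEq ι] (f : (ι → Bool) → Bool) : Prop :=
  ∃ c : ℝ, ∀ α : ι → Bool, walsh f α = 0 ∨ walsh f α = c ∨ walsh f α = -c

/-- `a_i = max_{w : wt(w) = i} W_f(w)²`. -/
noncomputable def maxWsqAt {ι : Type*} [Fintype ι] [DecidableEq ι]
    (f : (ι → Bool) → Bool) (i : ℕ) : ℝ :=
  sSup {z : ℝ | ∃ w : ι → Bool, bwt w = i ∧ z = (walsh f w) ^ 2}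

/-- Index type for the O'Donnell–Tan recursion: `f_m` is a function of `l^{m+1}` variables. -/
def OTIndex (l : ℕ) : ℕ → Type
  | 0 => Fin l
  | m + 1 => Fin l × OTIndex l m

instance OTIndex.instFintype (l : ℕ) : (m : ℕ) → Fintype (OTIndex l m)
  | 0 => inferInstanceAs (Fintype (Fin l))
  | m + 1 => letI := OTIndex.instFintype l m
             inferInstanceAs (Fintype (Fin l × OTIndex l m))

instance OTIndex.instDecidableEq (l : ℕ) : (m : ℕ) → DecidableEq (OTIndex l m)
  | 0 => inferInstanceAs (DecidableEq (Fin l))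
  | m + 1 => letI := OTIndex.instDecidableEq l m
             inferInstanceAs (DecidableEq (Fin l × OTIndex l m))

/-- The O'Donnell–Tan recursion `f_0 = g`, `f_m = g ⋄ f_{m-1}`. -/
def OTfun {l : ℕ} (g : (Fin l → Bool) → Bool) : (m : ℕ) → (OTIndex l m → Bool) → Bool
  | 0 => g
  | m + 1 => disjComp g (OTfun g m)


set_option linter.unusedSectionVars false
set_option maxHeartbeats 1000000

namespace SAux
variable {ι : Type*} [Fintype ι] [DecidableEq ι]

def sgn (f : (ι → Bool) → Bool) (x : ι → Bool) : ℝ := (-1) ^ (b2n (f x))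
def chr (α x : ι → Bool) : ℝ := (-1) ^ (∑ i, b2n (x i && α i))

lemma sgn_sq (f : (ι → Bool) → Bool) (x : ι → Bool) : sgn f x * sgn f x = 1 := by
  rw [sgn, ← pow_add]; exact Even.neg_one_pow ⟨_, rfl⟩

lemma chr_sq (α x : ι → Bool) : chr α x * chr α x = 1 := by
  rw [chr, ← pow_add]; exact Even.neg_one_pow ⟨_, rfl⟩

lemma walsh_eq (f : (ι → Bool) → Bool) (α : ι → Bool) :
    walsh f α = (2 ^ Fintype.card ι : ℝ)⁻¹ * ∑ x, sgn f x * chr α x := by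
  rw [walsh]; congr 1; exact Finset.sum_congr rfl fun x _ => pow_add _ _ _

lemma chr_comm (α x : ι → Bool) : chr α x = chr x α := by
  unfold chr; congr 1; exact Finset.sum_congr rfl fun i _ => by rw [Bool.and_comm]

lemma chr_prod (α x : ι → Bool) : chr α x = ∏ i, (-1 : ℝ) ^ (b2n (x i && α i)) := by
  rw [chr, ← Finset.prod_pow_eq_pow_sum]

lemma sum_chr (α : ι → Bool) :
    ∑ x : ι → Bool, chr α x = if α = (fun _ => false) then (2 : ℝ) ^ Fintype.card ι else 0 := by
  have h1 : ∀ x : ι → Bool, chr α x = ∏ i, (-1 : ℝ) ^ (b2n (x i && α i)) := chr_prod α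
  simp only [h1]
  rw [← Fintype.prod_sum (fun i (c : Bool) => (-1 : ℝ) ^ (b2n (c && α i)))]
  have h2 : ∀ i, (∑ c : Bool, (-1 : ℝ) ^ (b2n (c && α i))) = if α i then 0 else 2 := by
    intro i; cases hai : α i <;> simp [b2n]
  simp only [h2]
  by_cases hz : α = fun _ => false
  · subst hz; simp
  · rw [if_neg hz]
    obtain ⟨i, hi⟩ : ∃ i, α i = true := by
      by_contra hc; push_neg at hc
      exact hz (funext fun i => by simpa using hc i)
    exact Finset.prod_eq_zero (Finset.mem_univ i) (by rw [hi, if_pos rfl])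

lemma chr_mul (α β x : ι → Bool) :
    chr α x * chr β x = chr (fun i => xor (α i) (β i)) x := by
  rw [chr_prod, chr_prod, chr_prod, ← Finset.prod_mul_distrib]
  refine Finset.prod_congr rfl fun i _ => ?_
  rw [← pow_add]
  cases x i <;> cases α i <;> cases β i <;> norm_num [b2n]

lemma sum_chr_mul (α β : ι → Bool) :
    ∑ x : ι → Bool, chr α x * chr β x = if α = β then (2 : ℝ) ^ Fintype.card ι else 0 := by
  simp only [chr_mul, sum_chr]
  congr 1
  simp only [eq_iff_iff]
  constructor
  · intro h; funext i
    have := congrFun h i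
    cases hα : α i <;> cases hβ : β i <;> simp_all
  · intro h; subst h; funext i; simp

lemma two_pow_ne (m : ℕ) : ((2 : ℝ) ^ m) ≠ 0 := by positivity

lemma inversion (f : (ι → Bool) → Bool) (x : ι → Bool) :
    ∑ α : ι → Bool, walsh f α * chr α x = sgn f x := by
  have h1 : ∀ α : ι → Bool, walsh f α * chr α x
      = (2 ^ Fintype.card ι : ℝ)⁻¹ * ∑ y, sgn f y * (chr y α * chr x α) := by
    intro α
    rw [walsh_eq, mul_assoc, Finset.sum_mul]
    congr 1
    exact Finset.sum_congr rfl fun y _ => by rw [mul_assoc, chr_comm α y, chr_comm α x]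
  simp only [h1, ← Finset.mul_sum]
  rw [Finset.sum_comm]
  have h2 : ∀ y : ι → Bool, (∑ α : ι → Bool, sgn f y * (chr y α * chr x α))
      = sgn f y * (if y = x then (2:ℝ) ^ Fintype.card ι else 0) := by
    intro y; rw [← Finset.mul_sum, sum_chr_mul]
  simp only [h2, mul_ite, mul_zero]
  rw [Finset.sum_ite_eq' Finset.univ x (fun y => sgn f y * (2:ℝ) ^ Fintype.card ι)]
  simp [mul_comm, inv_mul_cancel_left₀ (two_pow_ne (Fintype.card ι))]


lemma parseval (f : (ι → Bool) → Bool) :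
    ∑ α : ι → Bool, walsh f α ^ 2 = 1 := by
  have h1 : ∀ α : ι → Bool, walsh f α ^ 2
      = (2 ^ Fintype.card ι : ℝ)⁻¹ * ∑ x, sgn f x * (walsh f α * chr α x) := by
    intro α
    rw [pow_two]
    nth_rewrite 2 [walsh_eq]
    rw [mul_comm (walsh f α), mul_assoc, Finset.sum_mul]
    congr 1
    exact Finset.sum_congr rfl fun x _ => by ring
  simp only [h1, ← Finset.mul_sum]
  rw [Finset.sum_comm]
  have h2 : ∀ x : ι → Bool, (∑ α : ι → Bool, sgn f x * (walsh f α * chr α x))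
      = 1 := by
    intro x
    rw [← Finset.mul_sum, inversion, sgn_sq]
  simp only [h2]
  simp [Finset.card_univ]

lemma exists_walsh_ne (f : (ι → Bool) → Bool) : ∃ α : ι → Bool, walsh f α ≠ 0 := by
  by_contra hc; push_neg at hc
  have := parseval f
  simp only [hc] at this
  norm_num at this

lemma walsh_zero_of_balanced (f : (ι → Bool) → Bool) (hb : balanced f)
    (hc : 0 < Fintype.card ι) : walsh f (fun _ => false) = 0 := by
  rw [walsh]
  have h1 : ∀ x : ι → Bool, (-1 : ℝ) ^ (b2n (f x) + ∑ i, b2n (x i && false))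
      = if f x = true then (-1 : ℝ) else 1 := by
    intro x
    simp only [Bool.and_false, b2n]
    cases hfx : f x <;> simp
  simp only [h1]
  rw [Finset.sum_ite, Finset.sum_const, Finset.sum_const]
  have h2 : (Finset.univ.filter fun x : ι → Bool => ¬ f x = true).card
      = 2 ^ (Fintype.card ι - 1) := by
    have h3 := Finset.card_filter_add_card_filter_not (s := (Finset.univ : Finset (ι → Bool))) (p := fun x => f x = true)
    rw [hb] at h3
    simp only [Finset.card_univ, Fintype.card_fun, Fintype.card_bool] at h3
    obtain ⟨k, hk⟩ : ∃ k, Fintype.card ι = k + 1 := ⟨Fintype.card ι - 1, by omega⟩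
    rw [hk] at h3 ⊢
    simp only [Nat.add_sub_cancel] at h3 ⊢
    rw [pow_succ] at h3
    omega
  rw [hb, h2]
  simp only [nsmul_eq_mul, mul_one, mul_neg_one]
  ring

lemma chr_flip (α x : ι → Bool) (i : ι) :
    chr α (Function.update x i (!x i)) = (if α i then (-1:ℝ) else 1) * chr α x := by
  rw [chr_prod, chr_prod, ← Finset.mul_prod_erase Finset.univ _ (Finset.mem_univ i),
    ← Finset.mul_prod_erase Finset.univ (fun j => (-1:ℝ) ^ (b2n (x j && α j))) (Finset.mem_univ i)]
  have hrest : ∀ j ∈ Finset.univ.erase i,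
      (-1:ℝ) ^ (b2n (Function.update x i (!x i) j && α j)) = (-1:ℝ) ^ (b2n (x j && α j)) := by
    intro j hj
    rw [Function.update_of_ne (Finset.ne_of_mem_erase hj)]
  rw [Finset.prod_congr rfl hrest, Function.update_self]
  cases hai : α i <;> cases hxi : x i <;> simp [b2n] <;> ring

lemma prob_flip (f : (ι → Bool) → Bool) (i : ι) :
    ((Finset.univ.filter fun x : ι → Bool =>
       f x ≠ f (Function.update x i (!x i))).card : ℝ) / 2 ^ Fintype.card ι
    = ∑ α ∈ Finset.univ.filter (fun α : ι → Bool => α i = true), walsh f α ^ 2 := by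
  set S := Finset.univ.filter fun x : ι → Bool => f x ≠ f (Function.update x i (!x i)) with hS
  set E := ∑ x : ι → Bool, sgn f x * sgn f (Function.update x i (!x i)) with hE
  have e1 : E = 2 ^ Fintype.card ι - 2 * S.card := by
    rw [hE]
    have h1 : ∀ x : ι → Bool, sgn f x * sgn f (Function.update x i (!x i))
        = if f x ≠ f (Function.update x i (!x i)) then (-1:ℝ) else 1 := by
      intro x
      unfold sgn
      cases h1 : f x <;> cases h2 : f (Function.update x i (!x i)) <;> simp [b2n]
    simp only [h1]
    rw [Finset.sum_ite, Finset.sum_const, Finset.sum_const, ← hS]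
    simp only [not_not, nsmul_eq_mul, mul_one, mul_neg_one]
    have h3 := Finset.card_filter_add_card_filter_not (s := (Finset.univ : Finset (ι → Bool))) (p := fun x => f x ≠ f (Function.update x i (!x i)))
    simp only [Finset.card_univ, Fintype.card_fun, Fintype.card_bool, not_not] at h3
    rw [← hS] at h3
    have h4 : ((Finset.univ.filter fun x : ι → Bool => f x = f (Function.update x i (!x i))).card : ℝ) = 2 ^ Fintype.card ι - S.card := by
      have h5 := congrArg (Nat.cast : ℕ → ℝ) h3
      push_cast at h5
      linarith
    rw [h4]
    ring
  have e2 : E = 2 ^ Fintype.card ι * ∑ α : ι → Bool, walsh f α ^ 2 * (if α i then (-1:ℝ) else 1) := by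
    set ε : (ι → Bool) → ℝ := fun β => if β i = true then (-1:ℝ) else 1 with hε
    have h1 : ∀ x : ι → Bool, sgn f x * sgn f (Function.update x i (!x i))
        = ∑ α : ι → Bool, ∑ β : ι → Bool, walsh f α * walsh f β * ε β * (chr α x * chr β x) := by
      intro x
      rw [← inversion f x, ← inversion f (Function.update x i (!x i)), Finset.sum_mul]
      refine Finset.sum_congr rfl fun α _ => ?_
      rw [Finset.mul_sum]
      refine Finset.sum_congr rfl fun β _ => ?_
      rw [chr_flip, hε]
      ring
    rw [hE]
    simp only [h1]
    rw [Finset.sum_comm, Finset.mul_sum]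
    refine Finset.sum_congr rfl fun α _ => ?_
    rw [Finset.sum_comm]
    have h2 : ∀ β : ι → Bool, (∑ x : ι → Bool, walsh f α * walsh f β * ε β * (chr α x * chr β x))
        = walsh f α * walsh f β * ε β * (if α = β then (2:ℝ) ^ Fintype.card ι else 0) := by
      intro β; rw [← Finset.mul_sum, sum_chr_mul]
    rw [Finset.sum_congr rfl fun β _ => h2 β]
    simp only [mul_ite, mul_zero]
    rw [Finset.sum_ite_eq Finset.univ α
      (fun β => walsh f α * walsh f β * ε β * (2:ℝ) ^ Fintype.card ι)]
    simp only [Finset.mem_univ, if_pos, hε]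
    cases hai : α i <;> simp [hai] <;> ring
  have key : (S.card : ℝ) / 2 ^ Fintype.card ι
      = ∑ α : ι → Bool, walsh f α ^ 2 * (if α i then (1:ℝ) else 0) := by
    have h5 : ∑ α : ι → Bool, walsh f α ^ 2 * (if α i then (1:ℝ) else 0)
        = (∑ α : ι → Bool, walsh f α ^ 2 - ∑ α : ι → Bool, walsh f α ^ 2 * (if α i then (-1:ℝ) else 1)) / 2 := by
      rw [← Finset.sum_sub_distrib, Finset.sum_div]
      refine Finset.sum_congr rfl fun α _ => ?_
      cases hai : α i <;> simp <;> ring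
    rw [h5, parseval]
    have h6 : ∑ α : ι → Bool, walsh f α ^ 2 * (if α i then (-1:ℝ) else 1)
        = E / 2 ^ Fintype.card ι := by
      rw [e2]; field_simp
    rw [h6, e1]
    field_simp
    ring
  rw [key]
  rw [Finset.sum_filter]
  refine Finset.sum_congr rfl fun α _ => ?_
  cases hai : α i <;> simp

lemma bwt_eq_sum (α : ι → Bool) : bwt α = ∑ i, b2n (α i) := by
  rw [bwt, Finset.card_filter]
  exact Finset.sum_congr rfl fun i _ => by cases α i <;> simp [b2n]

lemma influence_eq (f : (ι → Bool) → Bool) :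
    influence f = ∑ α : ι → Bool, (bwt α : ℝ) * walsh f α ^ 2 := by
  rw [influence]
  simp only [prob_flip]
  simp only [Finset.sum_filter]
  rw [Finset.sum_comm]
  refine Finset.sum_congr rfl fun α _ => ?_
  have h1 : ∀ i : ι, (if α i = true then walsh f α ^ 2 else 0)
      = (b2n (α i) : ℝ) * walsh f α ^ 2 := by
    intro i; cases hai : α i <;> simp [b2n]
  simp only [h1, ← Finset.sum_mul, bwt_eq_sum]
  push_cast
  ring


section Comp
variable {κ : Type*} [Fintype κ] [DecidableEq κ]

def blk (β : ι × κ → Bool) (i : ι) : κ → Bool := fun j => β (i, j)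

def ind (β : ι × κ → Bool) : ι → Bool :=
  fun i => if blk β i = (fun _ => false) then false else true

lemma walsh_disjComp (f : (ι → Bool) → Bool) (g : (κ → Bool) → Bool)
    (hg0 : walsh g (fun _ => false) = 0) (β : ι × κ → Bool) :
    walsh (disjComp f g) β
      = walsh f (ind β) *
        ∏ i : ι, (if blk β i = (fun _ => false) then 1 else walsh g (blk β i)) := by
  classical
  set D : (ι → Bool) → ι → ℝ := fun w i =>
    if w i then walsh g (blk β i) else (if blk β i = (fun _ => false) then 1 else 0) with hD
  have hch : ∀ (x : ι × κ → Bool) (w : ι → Bool),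
      chr w (fun i => g (blk x i)) = ∏ i, (if w i then sgn g (blk x i) else 1) := by
    intro x w
    rw [chr_prod]
    refine Finset.prod_congr rfl fun i _ => ?_
    cases hwi : w i <;> simp [b2n, sgn]
  have hcb : ∀ x : ι × κ → Bool, chr β x = ∏ i : ι, chr (blk β i) (blk x i) := by
    intro x
    rw [chr, Fintype.sum_prod_type, ← Finset.prod_pow_eq_pow_sum]
    exact Finset.prod_congr rfl fun i _ => rfl
  have hsum : ∑ x : ι × κ → Bool, sgn (disjComp f g) x * chr β x
      = ∑ w : ι → Bool, walsh f w *
          ∑ x : ι × κ → Bool, ∏ i, ((if w i then sgn g (blk x i) else 1) * chr (blk β i) (blk x i)) := by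
    have h1 : ∀ x : ι × κ → Bool, sgn (disjComp f g) x * chr β x
        = ∑ w : ι → Bool, walsh f w * ∏ i, ((if w i then sgn g (blk x i) else 1) * chr (blk β i) (blk x i)) := by
      intro x
      have ha : sgn (disjComp f g) x = sgn f (fun i => g (blk x i)) := rfl
      rw [ha, ← inversion f (fun i => g (blk x i)), Finset.sum_mul]
      refine Finset.sum_congr rfl fun w _ => ?_
      rw [mul_assoc]
      congr 1
      rw [hch x w, hcb x, ← Finset.prod_mul_distrib]
    simp only [h1]
    rw [Finset.sum_comm]
    exact Finset.sum_congr rfl fun w _ => (Finset.mul_sum _ _ _).symm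
  have h2 : ∀ w : ι → Bool,
      (∑ x : ι × κ → Bool, ∏ i, ((if w i then sgn g (blk x i) else 1) * chr (blk β i) (blk x i)))
      = ∏ i : ι, ∑ z : κ → Bool, ((if w i then sgn g z else 1) * chr (blk β i) z) := by
    intro w
    rw [Fintype.prod_sum fun i (z : κ → Bool) => ((if w i then sgn g z else 1) * chr (blk β i) z)]
    exact Fintype.sum_equiv (Equiv.curry ι κ Bool) _ _ (fun x => rfl)
  have h3 : ∀ (w : ι → Bool) (i : ι),
      (∑ z : κ → Bool, ((if w i then sgn g z else 1) * chr (blk β i) z))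
      = 2 ^ Fintype.card κ * D w i := by
    intro w i
    rw [hD]
    cases hwi : w i
    · simp only [hwi, Bool.false_eq_true, if_false, one_mul]
      rw [sum_chr]
      by_cases hz : blk β i = (fun _ => false) <;> simp [hz]
    · simp only [hwi, if_true]
      rw [walsh_eq g (blk β i), ← mul_assoc, mul_inv_cancel₀ (two_pow_ne _), one_mul]
  have h5 : ∑ w : ι → Bool, walsh f w * ∏ i, D w i
      = walsh f (ind β) * ∏ i : ι, (if blk β i = (fun _ => false) then 1 else walsh g (blk β i)) := by
    rw [Finset.sum_eq_single (ind β)]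
    · congr 1
      refine Finset.prod_congr rfl fun i _ => ?_
      by_cases hz : blk β i = (fun _ => false)
      · simp [hD, ind, hz]
      · simp [hD, ind, hz]
    · intro w _ hw
      obtain ⟨i, hi⟩ : ∃ i, w i ≠ ind β i := by
        by_contra hc; push_neg at hc; exact hw (funext hc)
      apply mul_eq_zero_of_right
      apply Finset.prod_eq_zero (Finset.mem_univ i)
      by_cases hz : blk β i = (fun _ => false)
      · have hwi : w i = true := by
          simp only [ind, if_pos hz] at hi
          cases hwx : w i
          · exact absurd (by rw [hwx]) hi
          · rfl
        simp only [hD, hwi, if_true, hz]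
        exact hg0
      · have hwi : w i = false := by
          simp only [ind, if_neg hz] at hi
          cases hwx : w i
          · rfl
          · exact absurd (by rw [hwx]) hi
        simp [hD, hwi, hz]
    · intro h; exact absurd (Finset.mem_univ _) h
  have hfinal : ∑ x : ι × κ → Bool, sgn (disjComp f g) x * chr β x
      = 2 ^ Fintype.card (ι × κ) *
        (walsh f (ind β) * ∏ i : ι, (if blk β i = (fun _ => false) then 1 else walsh g (blk β i))) := by
    rw [hsum]
    have h6 : ∀ w : ι → Bool, walsh f w *
        (∑ x : ι × κ → Bool, ∏ i, ((if w i then sgn g (blk x i) else 1) * chr (blk β i) (blk x i)))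
        = 2 ^ Fintype.card (ι × κ) * (walsh f w * ∏ i, D w i) := by
      intro w
      rw [h2 w, Finset.prod_congr rfl fun i _ => h3 w i, Finset.prod_mul_distrib,
        Finset.prod_const, Finset.card_univ]
      rw [Fintype.card_prod, mul_comm (Fintype.card ι) (Fintype.card κ), pow_mul]
      ring
    rw [Finset.sum_congr rfl fun w _ => h6 w, ← Finset.mul_sum, h5]
  rw [walsh_eq, hfinal, ← mul_assoc, inv_mul_cancel₀ (two_pow_ne _), one_mul]


lemma walsh_disjComp_sq (f : (ι → Bool) → Bool) (g : (κ → Bool) → Bool)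
    (hg0 : walsh g (fun _ => false) = 0) (β : ι × κ → Bool) :
    walsh (disjComp f g) β ^ 2
      = walsh f (ind β) ^ 2 *
        ∏ i : ι, (if blk β i = (fun _ => false) then 1 else walsh g (blk β i) ^ 2) := by
  rw [walsh_disjComp f g hg0 β, mul_pow, ← Finset.prod_pow]
  congr 1
  refine Finset.prod_congr rfl fun i _ => ?_
  by_cases hz : blk β i = (fun _ => false) <;> simp [hz]

lemma bwt_uncurry (p : ι → κ → Bool) :
    bwt (fun q : ι × κ => p q.1 q.2) = ∑ i, bwt (p i) := by
  simp only [bwt_eq_sum]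
  rw [Fintype.sum_prod_type]

lemma influence_disjComp (f : (ι → Bool) → Bool) (g : (κ → Bool) → Bool)
    (hg0 : walsh g (fun _ => false) = 0) :
    influence (disjComp f g) = influence f * influence g := by
  classical
  set R : (κ → Bool) → ℝ := fun z => (bwt z : ℝ) with hR
  set q : Bool → (κ → Bool) → ℝ := fun c z =>
    if c then (if z = (fun _ => false) then 0 else walsh g z ^ 2)
    else (if z = (fun _ => false) then 1 else 0) with hq
  have hbz : bwt (fun _ : κ => false) = 0 := by simp [bwt]
  have hq1 : ∀ c, ∑ z : κ → Bool, q c z = 1 := by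
    intro c
    rw [hq]
    cases c
    · simp only [Bool.false_eq_true, if_false]
      rw [Finset.sum_ite_eq' Finset.univ (fun _ => false) (fun _ => (1:ℝ))]
      simp
    · simp only [if_true]
      have hpt : ∀ z : κ → Bool, (if z = (fun _ => false) then (0:ℝ) else walsh g z ^ 2)
          = walsh g z ^ 2 - (if z = (fun _ => false) then walsh g z ^ 2 else 0) := by
        intro z; split <;> simp
      simp only [hpt]
      rw [Finset.sum_sub_distrib, parseval,
        Finset.sum_ite_eq' Finset.univ (fun _ => false) (fun z => walsh g z ^ 2)]
      simp [hg0]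
  have hq2 : ∀ c, ∑ z : κ → Bool, R z * q c z = if c then influence g else 0 := by
    intro c
    rw [hq, hR]
    cases c
    · simp only [Bool.false_eq_true, if_false, mul_ite, mul_one, mul_zero]
      rw [Finset.sum_ite_eq' Finset.univ (fun _ => false) (fun z => (bwt z : ℝ))]
      simp [hbz]
    · simp only [if_true]
      have hpt : ∀ z : κ → Bool, (bwt z : ℝ) * (if z = (fun _ => false) then (0:ℝ) else walsh g z ^ 2)
          = (bwt z : ℝ) * walsh g z ^ 2 - (if z = (fun _ => false) then (bwt z : ℝ) * walsh g z ^ 2 else 0) := by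
        intro z; split <;> simp
      simp only [hpt]
      rw [Finset.sum_sub_distrib, ← influence_eq,
        Finset.sum_ite_eq' Finset.univ (fun _ => false) (fun z => (bwt z : ℝ) * walsh g z ^ 2)]
      simp [hbz]
  rw [influence_eq]
  rw [show (∑ β : ι × κ → Bool, (bwt β : ℝ) * walsh (disjComp f g) β ^ 2)
      = ∑ p : ι → κ → Bool, (bwt (fun pr : ι × κ => p pr.1 pr.2) : ℝ) *
          walsh (disjComp f g) (fun pr => p pr.1 pr.2) ^ 2
    from Fintype.sum_equiv (Equiv.curry ι κ Bool) _ _ (fun β => rfl)]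
  have step1 : ∀ p : ι → κ → Bool,
      (bwt (fun pr : ι × κ => p pr.1 pr.2) : ℝ) * walsh (disjComp f g) (fun pr => p pr.1 pr.2) ^ 2
      = ∑ w : ι → Bool, walsh f w ^ 2 * ((∑ i, R (p i)) * ∏ i, q (w i) (p i)) := by
    intro p
    have hW : walsh (disjComp f g) (fun pr : ι × κ => p pr.1 pr.2) ^ 2
        = walsh f (ind (fun pr : ι × κ => p pr.1 pr.2)) ^ 2 *
            ∏ i : ι, (if p i = (fun _ => false) then 1 else walsh g (p i) ^ 2) :=
      walsh_disjComp_sq f g hg0 (fun pr : ι × κ => p pr.1 pr.2)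
    have hind : ∀ i : ι, ind (fun pr : ι × κ => p pr.1 pr.2) i
        = if p i = (fun _ => false) then false else true := fun i => rfl
    have hb : (bwt (fun pr : ι × κ => p pr.1 pr.2) : ℝ) = ∑ i, R (p i) := by
      rw [bwt_uncurry, hR]
      push_cast
      rfl
    have hIw : walsh f (ind (fun pr : ι × κ => p pr.1 pr.2)) ^ 2 *
          (∏ i : ι, (if p i = (fun _ => false) then 1 else walsh g (p i) ^ 2))
        = ∑ w : ι → Bool, walsh f w ^ 2 * ∏ i, q (w i) (p i) := by
      rw [Finset.sum_eq_single (ind (fun pr : ι × κ => p pr.1 pr.2))]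
      · congr 1
        refine Finset.prod_congr rfl fun i _ => ?_
        rw [hq]
        by_cases hz : p i = (fun _ => false)
        · rw [if_pos hz, hind i, if_pos hz]
          simp [hz]
        · rw [if_neg hz, hind i, if_neg hz]
          simp [hz]
      · intro w _ hw
        obtain ⟨i, hi⟩ : ∃ i, w i ≠ ind (fun pr : ι × κ => p pr.1 pr.2) i := by
          by_contra hc; push_neg at hc; exact hw (funext hc)
        apply mul_eq_zero_of_right
        apply Finset.prod_eq_zero (Finset.mem_univ i)
        rw [hind i] at hi
        rw [hq]
        by_cases hz : p i = (fun _ => false)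
        · rw [if_pos hz] at hi
          have hwi : w i = true := by
            cases hwx : w i
            · exact absurd (by rw [hwx]) hi
            · rfl
          rw [hwi]
          simp [hz]
        · rw [if_neg hz] at hi
          have hwi : w i = false := by
            cases hwx : w i
            · rfl
            · exact absurd (by rw [hwx]) hi
          rw [hwi]
          simp [hz]
      · intro h; exact absurd (Finset.mem_univ _) h
    rw [hW, hb, hIw, Finset.mul_sum]
    exact Finset.sum_congr rfl fun w _ => by ring
  simp only [step1]
  rw [Finset.sum_comm]
  have step2 : ∀ w : ι → Bool,
      (∑ p : ι → κ → Bool, (∑ i, R (p i)) * ∏ i, q (w i) (p i))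
      = (bwt w : ℝ) * influence g := by
    intro w
    have e1 : ∀ p : ι → κ → Bool, (∑ i, R (p i)) * ∏ i', q (w i') (p i')
        = ∑ i, ∏ i', (if i' = i then R (p i') * q (w i') (p i') else q (w i') (p i')) := by
      intro p
      rw [Finset.sum_mul]
      refine Finset.sum_congr rfl fun i _ => ?_
      rw [← Finset.mul_prod_erase Finset.univ
            (fun i' => if i' = i then R (p i') * q (w i') (p i') else q (w i') (p i'))
            (Finset.mem_univ i),
          ← Finset.mul_prod_erase Finset.univ (fun i' => q (w i') (p i')) (Finset.mem_univ i)]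
      rw [if_pos rfl]
      have hpt : ∀ i' ∈ Finset.univ.erase i,
          (if i' = i then R (p i') * q (w i') (p i') else q (w i') (p i'))
          = q (w i') (p i') := fun i' hi' => if_neg (Finset.ne_of_mem_erase hi')
      rw [Finset.prod_congr rfl hpt]
      ring
    simp only [e1]
    rw [Finset.sum_comm]
    have e2 : ∀ i : ι,
        (∑ p : ι → κ → Bool, ∏ i', (if i' = i then R (p i') * q (w i') (p i') else q (w i') (p i')))
        = if w i then influence g else 0 := by
      intro i
      rw [← Fintype.prod_sum
        (fun i' (z : κ → Bool) => if i' = i then R z * q (w i') z else q (w i') z)]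
      rw [← Finset.mul_prod_erase Finset.univ
            (fun i' => ∑ z : κ → Bool, (if i' = i then R z * q (w i') z else q (w i') z))
            (Finset.mem_univ i)]
      have hfst : (∑ z : κ → Bool, (if i = i then R z * q (w i) z else q (w i) z))
          = if w i then influence g else 0 := by
        have hpt : ∀ z : κ → Bool, (if i = i then R z * q (w i) z else q (w i) z)
            = R z * q (w i) z := fun z => if_pos rfl
        rw [Finset.sum_congr rfl (fun z _ => hpt z), hq2]
      have hrest : ∀ i' ∈ Finset.univ.erase i,
          (∑ z : κ → Bool, (if i' = i then R z * q (w i') z else q (w i') z)) = 1 := by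
        intro i' hi'
        have hpt : ∀ z : κ → Bool, (if i' = i then R z * q (w i') z else q (w i') z)
            = q (w i') z := fun z => if_neg (Finset.ne_of_mem_erase hi')
        rw [Finset.sum_congr rfl (fun z _ => hpt z), hq1]
      rw [hfst, Finset.prod_congr rfl hrest, Finset.prod_const_one, mul_one]
    simp only [e2]
    have e3 : ∀ i : ι, (if w i then influence g else 0) = (b2n (w i) : ℝ) * influence g := by
      intro i; cases hwi : w i <;> simp [b2n]
    simp only [e3]
    rw [← Finset.sum_mul, bwt_eq_sum]
    push_cast
    rfl
  have step3 : ∀ w : ι → Bool,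
      (∑ p : ι → κ → Bool, walsh f w ^ 2 * ((∑ i, R (p i)) * ∏ i, q (w i) (p i)))
      = walsh f w ^ 2 * ((bwt w : ℝ) * influence g) := by
    intro w; rw [← Finset.mul_sum, step2]
  simp only [step3]
  rw [influence_eq f, Finset.sum_mul]
  exact Finset.sum_congr rfl fun w _ => by ring

end Comp

lemma chr_not (α x : ι → Bool) : chr α (fun i => !x i) = (-1:ℝ)^(bwt α) * chr α x := by
  have h1 : chr α (fun i => !x i) * chr α x = (-1:ℝ)^(bwt α) := by
    rw [chr_prod, chr_prod, ← Finset.prod_mul_distrib, bwt_eq_sum, ← Finset.prod_pow_eq_pow_sum]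
    refine Finset.prod_congr rfl fun i _ => ?_
    rw [← pow_add]
    cases x i <;> cases α i <;> norm_num [b2n]
  calc chr α (fun i => !x i) = chr α (fun i => !x i) * (chr α x * chr α x) := by
        rw [chr_sq]; ring
  _ = (-1:ℝ)^(bwt α) * chr α x := by rw [← mul_assoc, h1]


lemma minEntropy_mem (f : (ι → Bool) → Bool) :
    ∃ α : ι → Bool, walsh f α ≠ 0 ∧ minEntropy f = Real.logb 2 (1 / walsh f α ^ 2) := by
  have hfin : {y : ℝ | ∃ α : ι → Bool, walsh f α ≠ 0 ∧ y = Real.logb 2 (1 / (walsh f α) ^ 2)}.Finite :=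
    Set.Finite.subset (Set.finite_range fun α : ι → Bool => Real.logb 2 (1 / walsh f α ^ 2))
      (by rintro y ⟨α, _, rfl⟩; exact ⟨α, rfl⟩)
  have hne : {y : ℝ | ∃ α : ι → Bool, walsh f α ≠ 0 ∧ y = Real.logb 2 (1 / (walsh f α) ^ 2)}.Nonempty := by
    obtain ⟨α, hα⟩ := exists_walsh_ne f
    exact ⟨_, α, hα, rfl⟩
  obtain ⟨α, hα, hval⟩ := hne.csInf_mem hfin
  exact ⟨α, hα, hval⟩

lemma minEntropy_le (f : (ι → Bool) → Bool) (α : ι → Bool) (hα : walsh f α ≠ 0) :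
    minEntropy f ≤ Real.logb 2 (1 / walsh f α ^ 2) := by
  have hfin : {y : ℝ | ∃ α : ι → Bool, walsh f α ≠ 0 ∧ y = Real.logb 2 (1 / (walsh f α) ^ 2)}.Finite :=
    Set.Finite.subset (Set.finite_range fun α : ι → Bool => Real.logb 2 (1 / walsh f α ^ 2))
      (by rintro y ⟨α, _, rfl⟩; exact ⟨α, rfl⟩)
  exact csInf_le hfin.bddBelow ⟨α, hα, rfl⟩

lemma bwt_le (w : ι → Bool) : bwt w ≤ Fintype.card ι := by
  rw [bwt, ← Finset.card_univ]
  exact Finset.card_filter_le _ _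

lemma maxWsq_fin (f : (ι → Bool) → Bool) (i : ℕ) :
    {z : ℝ | ∃ w : ι → Bool, bwt w = i ∧ z = (walsh f w) ^ 2}.Finite :=
  Set.Finite.subset (Set.finite_range fun w : ι → Bool => walsh f w ^ 2)
    (by rintro z ⟨w, _, rfl⟩; exact ⟨w, rfl⟩)

lemma maxWsq_mem (f : (ι → Bool) → Bool) (i : ℕ) (hi : i ≤ Fintype.card ι) :
    ∃ w : ι → Bool, bwt w = i ∧ maxWsqAt f i = walsh f w ^ 2 := by
  have hne : {z : ℝ | ∃ w : ι → Bool, bwt w = i ∧ z = (walsh f w) ^ 2}.Nonempty := by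
    obtain ⟨t, hts, htc⟩ := Finset.exists_subset_card_eq (s := (Finset.univ : Finset ι)) (n := i)
      (by simpa [Finset.card_univ] using hi)
    refine ⟨walsh f (fun j => decide (j ∈ t)) ^ 2, fun j => decide (j ∈ t), ?_, rfl⟩
    rw [bwt]
    have he : (Finset.univ.filter fun j => (decide (j ∈ t) : Bool) = true) = t := by
      ext j; simp
    rw [he, htc]
  obtain ⟨w, hw, hval⟩ := hne.csSup_mem (maxWsq_fin f i)
  exact ⟨w, hw, hval⟩

lemma le_maxWsq (f : (ι → Bool) → Bool) (w : ι → Bool) :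
    walsh f w ^ 2 ≤ maxWsqAt f (bwt w) :=
  le_csSup (maxWsq_fin f (bwt w)).bddAbove ⟨w, rfl, rfl⟩

lemma logb_prod {γ : Type*} (s : Finset γ) (F : γ → ℝ) (h : ∀ j ∈ s, F j ≠ 0) :
    Real.logb 2 (∏ j ∈ s, F j) = ∑ j ∈ s, Real.logb 2 (F j) := by
  simp only [Real.logb, Real.log_prod h, Finset.sum_div]

section Comp2
variable {κ : Type*} [Fintype κ] [DecidableEq κ]

lemma minEntropy_disjComp (f : (ι → Bool) → Bool) (g : (κ → Bool) → Bool)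
    (hg0 : walsh g (fun _ => false) = 0) :
    minEntropy (disjComp f g)
      = sInf {y : ℝ | ∃ i : ℕ, i ≤ Fintype.card ι ∧ 0 < maxWsqAt f i ∧
          y = -Real.logb 2 (maxWsqAt f i) + (i : ℝ) * minEntropy g} := by
  classical
  set T := {y : ℝ | ∃ i : ℕ, i ≤ Fintype.card ι ∧ 0 < maxWsqAt f i ∧
      y = -Real.logb 2 (maxWsqAt f i) + (i : ℝ) * minEntropy g} with hT
  have hTfin : T.Finite :=
    Set.Finite.subset ((Set.finite_Iic (Fintype.card ι)).image
        fun i => -Real.logb 2 (maxWsqAt f i) + (i : ℝ) * minEntropy g)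
      (by rintro y ⟨i, hi, _, rfl⟩; exact ⟨i, hi, rfl⟩)
  have hTne : T.Nonempty := by
    obtain ⟨α, hα⟩ := exists_walsh_ne f
    have hpos : 0 < maxWsqAt f (bwt α) :=
      lt_of_lt_of_le (by positivity) (le_maxWsq f α)
    exact ⟨_, bwt α, bwt_le α, hpos, rfl⟩
  have main : ∀ β : ι × κ → Bool, walsh (disjComp f g) β ≠ 0 →
      walsh f (ind β) ≠ 0 ∧
      (∀ i' : ι, ¬ blk β i' = (fun _ => false) → walsh g (blk β i') ≠ 0) ∧
      Real.logb 2 (1 / walsh (disjComp f g) β ^ 2)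
        = -Real.logb 2 (walsh f (ind β) ^ 2)
          + ∑ i' : ι, (if blk β i' = (fun _ => false) then 0
              else -Real.logb 2 (walsh g (blk β i') ^ 2)) := by
    intro β hβ
    rw [walsh_disjComp f g hg0] at hβ
    have hfne : walsh f (ind β) ≠ 0 := left_ne_zero_of_mul hβ
    have hPne : (∏ i' : ι, (if blk β i' = (fun _ => false) then (1:ℝ) else walsh g (blk β i'))) ≠ 0 :=
      right_ne_zero_of_mul hβ
    have hfac : ∀ i' ∈ Finset.univ,
        (if blk β i' = (fun _ => false) then (1:ℝ) else walsh g (blk β i')) ≠ 0 :=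
      Finset.prod_ne_zero_iff.mp hPne
    have hgne : ∀ i' : ι, ¬ blk β i' = (fun _ => false) → walsh g (blk β i') ≠ 0 := by
      intro i' hz
      have := hfac i' (Finset.mem_univ i')
      rwa [if_neg hz] at this
    refine ⟨hfne, hgne, ?_⟩
    rw [one_div, Real.logb_inv, walsh_disjComp_sq f g hg0 β]
    have hmne : ∀ i' ∈ Finset.univ,
        (if blk β i' = (fun _ => false) then (1:ℝ) else walsh g (blk β i') ^ 2) ≠ 0 := by
      intro i' _
      by_cases hz : blk β i' = (fun _ => false)
      · rw [if_pos hz]; norm_num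
      · rw [if_neg hz]; exact pow_ne_zero 2 (hgne i' hz)
    rw [Real.logb_mul (pow_ne_zero 2 hfne) (Finset.prod_ne_zero_iff.mpr hmne),
      logb_prod Finset.univ _ hmne, neg_add]
    congr 1
    rw [← Finset.sum_neg_distrib]
    refine Finset.sum_congr rfl fun i' _ => ?_
    by_cases hz : blk β i' = (fun _ => false)
    · rw [if_pos hz, if_pos hz]; simp
    · rw [if_neg hz, if_neg hz]
  refine le_antisymm (le_csInf hTne ?_) ?_
  · rintro y ⟨i, hi, hpos, rfl⟩
    obtain ⟨w, hwwt, hwa⟩ := maxWsq_mem f i hi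
    have hwne : walsh f w ≠ 0 := by
      intro h
      rw [hwa, h] at hpos
      norm_num at hpos
    obtain ⟨α₀, hα₀ne, hα₀val⟩ := minEntropy_mem g
    have hα₀nz : α₀ ≠ (fun _ => false) := by
      rintro rfl; exact hα₀ne hg0
    set β : ι × κ → Bool := fun pr => w pr.1 && α₀ pr.2 with hβ
    have hblk : ∀ i' : ι, blk β i' = (if w i' then α₀ else fun _ => false) := by
      intro i'
      funext j
      have hrfl : blk β i' j = (w i' && α₀ j) := rfl
      rw [hrfl]
      cases hwi : w i' <;> simp
    have hind : ind β = w := by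
      funext i'
      rw [ind, hblk i']
      cases hwi : w i' <;> simp [hα₀nz]
    have hGne : walsh (disjComp f g) β ≠ 0 := by
      rw [walsh_disjComp f g hg0, hind]
      apply mul_ne_zero hwne
      apply Finset.prod_ne_zero_iff.mpr
      intro i' _
      rw [hblk i']
      cases hwi : w i'
      · simp
      · simpa [hα₀nz] using hα₀ne
    have hα₀val' : minEntropy g = -Real.logb 2 (walsh g α₀ ^ 2) := by
      rwa [one_div, Real.logb_inv] at hα₀val
    refine le_trans (minEntropy_le (disjComp f g) β hGne) (le_of_eq ?_)
    have hm := (main β hGne).2.2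
    rw [hm, hind]
    have hsum : ∑ i' : ι, (if blk β i' = (fun _ => false) then (0:ℝ)
          else -Real.logb 2 (walsh g (blk β i') ^ 2))
        = (i : ℝ) * minEntropy g := by
      have hterm : ∀ i' : ι, (if blk β i' = (fun _ => false) then (0:ℝ)
            else -Real.logb 2 (walsh g (blk β i') ^ 2))
          = (b2n (w i') : ℝ) * minEntropy g := by
        intro i'
        rw [hblk i']
        cases hwi : w i'
        · simp [b2n]
        · simp [hα₀nz, b2n, hα₀val']
      rw [Finset.sum_congr rfl fun i' _ => hterm i', ← Finset.sum_mul, ← hwwt, bwt_eq_sum]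
      push_cast
      rfl
    rw [hsum, hwa]
  · obtain ⟨β, hβne, hβval⟩ := minEntropy_mem (disjComp f g)
    obtain ⟨hfne, hgne, hval⟩ := main β hβne
    rw [hβval, hval]
    have hposi : 0 < maxWsqAt f (bwt (ind β)) :=
      lt_of_lt_of_le (by positivity) (le_maxWsq f (ind β))
    have hmemT : (-Real.logb 2 (maxWsqAt f (bwt (ind β))) + (bwt (ind β) : ℝ) * minEntropy g) ∈ T :=
      ⟨bwt (ind β), bwt_le _, hposi, rfl⟩
    refine le_trans (csInf_le hTfin.bddBelow hmemT) ?_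
    have h1 : -Real.logb 2 (maxWsqAt f (bwt (ind β))) ≤ -Real.logb 2 (walsh f (ind β) ^ 2) := by
      apply neg_le_neg
      exact Real.logb_le_logb_of_le (by norm_num) (by positivity) (le_maxWsq f (ind β))
    have h2 : (bwt (ind β) : ℝ) * minEntropy g
        ≤ ∑ i' : ι, (if blk β i' = (fun _ => false) then (0:ℝ)
            else -Real.logb 2 (walsh g (blk β i') ^ 2)) := by
      have hterm : ∀ i' : ι, (if blk β i' = (fun _ => false) then (0:ℝ)
            else -Real.logb 2 (walsh g (blk β i') ^ 2))
          = (if ¬ blk β i' = (fun _ => false) then -Real.logb 2 (walsh g (blk β i') ^ 2) else 0) := by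
        intro i'
        by_cases hz : blk β i' = (fun _ => false) <;> simp [hz]
      rw [Finset.sum_congr rfl fun i' _ => hterm i', ← Finset.sum_filter]
      have hcard : (Finset.univ.filter fun i' : ι => ¬ blk β i' = (fun _ => false)).card
          = bwt (ind β) := by
        rw [bwt]
        congr 1
        apply Finset.filter_congr
        intro i' _
        rw [ind]
        by_cases hz : blk β i' = (fun _ => false) <;> simp [hz]
      have hle : ∀ i' ∈ Finset.univ.filter (fun i' : ι => ¬ blk β i' = (fun _ => false)),
          minEntropy g ≤ -Real.logb 2 (walsh g (blk β i') ^ 2) := by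
        intro i' hi'
        have hz : ¬ blk β i' = (fun _ => false) := (Finset.mem_filter.mp hi').2
        have hh := minEntropy_le g (blk β i') (hgne i' hz)
        rwa [one_div, Real.logb_inv] at hh
      have hfin := Finset.card_nsmul_le_sum
        (Finset.univ.filter fun i' : ι => ¬ blk β i' = (fun _ => false)) _ _ hle
      rw [hcard] at hfin
      simpa [nsmul_eq_mul] using hfin
    exact add_le_add h1 h2

end Comp2

end SAux

namespace SAux

lemma bwt_cons {n : ℕ} (c : Bool) (z : Fin n → Bool) :
    bwt (Fin.cons c z : Fin (n+1) → Bool) = b2n c + bwt z := by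
  simp only [bwt_eq_sum, Fin.sum_univ_succ, Fin.cons_zero, Fin.cons_succ]

lemma walsh_palin {n : ℕ} (g : (Fin n → Bool) → Bool) (b : Bool) (γ : Fin (n+1) → Bool) :
    walsh (palin g b) γ
      = (if (b2n (γ 0) + b2n b + bwt (fun i : Fin n => γ i.succ)) % 2 = 0 then (1:ℝ) else 0)
        * walsh g (fun i => γ i.succ) := by
  rw [walsh_eq]
  have hre : ∑ x : Fin (n+1) → Bool, sgn (palin g b) x * chr γ x
      = ∑ cz : Bool × (Fin n → Bool),
          sgn (palin g b) (Fin.cons cz.1 cz.2) * chr γ (Fin.cons cz.1 cz.2) :=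
    (Fintype.sum_equiv (Fin.consEquiv (fun _ => Bool)) _ _ (fun cz => rfl)).symm
  have hchr : ∀ (c : Bool) (z : Fin n → Bool), chr γ (Fin.cons c z)
      = (-1:ℝ)^(b2n (c && γ 0)) * chr (fun i => γ i.succ) z := by
    intro c z
    rw [chr, chr, Fin.sum_univ_succ, pow_add]
    have e0 : ((Fin.cons c z : Fin (n+1) → Bool) 0 && γ 0) = (c && γ 0) := by simp
    have e1 : ∀ i : Fin n, ((Fin.cons c z : Fin (n+1) → Bool) i.succ && γ i.succ)
        = (z i && γ i.succ) := by intro i; simp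
    rw [e0, Finset.sum_congr rfl fun i _ => congrArg b2n (e1 i)]
  have hS : ∑ z : Fin n → Bool, sgn g z * chr (fun i => γ i.succ) z
      = 2^n * walsh g (fun i => γ i.succ) := by
    rw [walsh_eq, Fintype.card_fin, ← mul_assoc, mul_inv_cancel₀ (two_pow_ne n), one_mul]
  have hfalse : ∑ z : Fin n → Bool, sgn (palin g b) (Fin.cons false z) * chr γ (Fin.cons false z)
      = 2^n * walsh g (fun i => γ i.succ) := by
    rw [← hS]
    refine Finset.sum_congr rfl fun z _ => ?_
    rw [hchr false z]
    have h1 : sgn (palin g b) (Fin.cons false z) = sgn g z := by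
      unfold sgn
      have h3 : palin g b (Fin.cons false z) = g z := by simp [palin]
      rw [h3]
    rw [h1]
    simp [b2n]
  have htrue : ∑ z : Fin n → Bool, sgn (palin g b) (Fin.cons true z) * chr γ (Fin.cons true z)
      = (-1:ℝ)^(b2n (γ 0) + b2n b + bwt (fun i : Fin n => γ i.succ))
        * (2^n * walsh g (fun i => γ i.succ)) := by
    have h1 : ∀ z : Fin n → Bool, sgn (palin g b) (Fin.cons true z) * chr γ (Fin.cons true z)
        = ((-1:ℝ)^(b2n b) * (-1:ℝ)^(b2n (γ 0)))
          * (sgn g (fun i => !z i) * chr (fun i => γ i.succ) z) := by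
      intro z
      rw [hchr true z]
      have h2 : sgn (palin g b) (Fin.cons true z) = (-1:ℝ)^(b2n b) * sgn g (fun i => !z i) := by
        unfold sgn
        have h3 : palin g b (Fin.cons true z) = xor b (g (fun i => !z i)) := by simp [palin]
        rw [h3]
        cases b <;> cases hgz : g (fun i => !z i) <;> norm_num [b2n]
      rw [h2]
      have h4 : (true && γ 0) = γ 0 := by simp
      rw [h4]
      ring
    rw [Finset.sum_congr rfl fun z _ => h1 z, ← Finset.mul_sum]
    have hinv : Function.Involutive (fun z : Fin n → Bool => fun i => !z i) := by
      intro z; funext i; simp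
    have hre2 : ∑ z : Fin n → Bool, sgn g (fun i => !z i) * chr (fun i => γ i.succ) z
        = ∑ z : Fin n → Bool, sgn g z * chr (fun i => γ i.succ) (fun i => !z i) := by
      refine Fintype.sum_equiv hinv.toPerm _ _ fun z => ?_
      simp only [Function.Involutive.coe_toPerm]
      simp
    rw [hre2]
    have h5 : ∀ z : Fin n → Bool, sgn g z * chr (fun i => γ i.succ) (fun i => !z i)
        = (-1:ℝ)^(bwt (fun i : Fin n => γ i.succ)) * (sgn g z * chr (fun i => γ i.succ) z) := by
      intro z; rw [chr_not]; ring
    rw [Finset.sum_congr rfl fun z _ => h5 z, ← Finset.mul_sum, hS, ← mul_assoc, ← mul_assoc]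
    rw [← pow_add, ← pow_add]
    ring_nf
  rw [hre, Fintype.sum_prod_type, Fintype.sum_bool, hfalse, htrue, Fintype.card_fin]
  set W := walsh g (fun i => γ i.succ) with hW
  set E := b2n (γ 0) + b2n b + bwt (fun i : Fin n => γ i.succ) with hE
  rcases Nat.even_or_odd E with hpar | hpar
  · rw [hpar.neg_one_pow, if_pos (Nat.even_iff.mp hpar), pow_succ]
    have h2 : ((2:ℝ)^n * 2) ≠ 0 := by positivity
    field_simp
    ring
  · rw [hpar.neg_one_pow, if_neg (by rw [Nat.odd_iff.mp hpar]; norm_num)]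
    ring

lemma influence_palin {n : ℕ} (g : (Fin n → Bool) → Bool) (b : Bool) :
    influence (palin g b) = influence g + eps g b := by
  rw [influence_eq]
  rw [show (∑ γ : Fin (n+1) → Bool, (bwt γ : ℝ) * walsh (palin g b) γ ^ 2)
      = ∑ cz : Bool × (Fin n → Bool),
          (bwt (Fin.cons cz.1 cz.2 : Fin (n+1) → Bool) : ℝ) * walsh (palin g b) (Fin.cons cz.1 cz.2) ^ 2
    from (Fintype.sum_equiv (Fin.consEquiv (fun _ => Bool)) _ _ (fun cz => rfl)).symm]
  have hterm : ∀ (c : Bool) (z : Fin n → Bool),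
      (bwt (Fin.cons c z : Fin (n+1) → Bool) : ℝ) * walsh (palin g b) (Fin.cons c z) ^ 2
      = ((b2n c + bwt z : ℕ) : ℝ)
        * ((if (b2n c + b2n b + bwt z) % 2 = 0 then (1:ℝ) else 0) * walsh g z) ^ 2 := by
    intro c z
    rw [bwt_cons, walsh_palin]
    simp only [Fin.cons_zero, Fin.cons_succ]
  rw [Fintype.sum_prod_type, Fintype.sum_bool]
  simp only [hterm]
  rw [← Finset.sum_add_distrib]
  have key : ∀ z : Fin n → Bool,
      ((b2n true + bwt z : ℕ) : ℝ)
        * ((if (b2n true + b2n b + bwt z) % 2 = 0 then (1:ℝ) else 0) * walsh g z) ^ 2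
      + ((b2n false + bwt z : ℕ) : ℝ)
        * ((if (b2n false + b2n b + bwt z) % 2 = 0 then (1:ℝ) else 0) * walsh g z) ^ 2
      = (bwt z : ℝ) * walsh g z ^ 2
        + (if ¬ (bwt z % 2 = b2n b) then walsh g z ^ 2 else 0) := by
    intro z
    have hbt : b2n true = 1 := rfl
    have hbf : b2n false = 0 := rfl
    rcases Nat.mod_two_eq_zero_or_one (bwt z) with hz | hz <;> cases b <;>
      simp only [hbt, hbf] <;> split_ifs with h1 h2 h3 <;>
      first
        | (push_cast; ring1)
        | (exfalso; omega)
  rw [Finset.sum_congr rfl fun z _ => key z, Finset.sum_add_distrib, ← influence_eq,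
    eps, Finset.sum_filter]

end SAux

/-- Main construction: for balanced `g` and `G_b = g_b ⋄ g`,
`H_∞(G_b)/Inf(G_b) = (min_{i, a_i>0} (−log₂ a_i + i·H_∞(g)))/(Inf(g)(Inf(g)+ε_b(g)))`. -/
theorem stmt9 {n : ℕ} (hn : 0 < n) (g : (Fin n → Bool) → Bool) (hg : balanced g)
    (b : Bool) :
    minEntropy (disjComp (palin g b) g) / influence (disjComp (palin g b) g) =
      sInf {y : ℝ | ∃ i : ℕ, i ≤ n + 1 ∧ 0 < maxWsqAt (palin g b) i ∧
          y = -Real.logb 2 (maxWsqAt (palin g b) i) + (i : ℝ) * minEntropy g} /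
        (influence g * (influence g + eps g b)) := by
  have hg0 : walsh g (fun _ => false) = 0 :=
    SAux.walsh_zero_of_balanced g hg (by simpa using hn)
  have h1 : influence (disjComp (palin g b) g) = influence g * (influence g + eps g b) := by
    rw [SAux.influence_disjComp _ _ hg0, SAux.influence_palin, mul_comm]
  have h2 : minEntropy (disjComp (palin g b) g)
      = sInf {y : ℝ | ∃ i : ℕ, i ≤ n + 1 ∧ 0 < maxWsqAt (palin g b) i ∧
          y = -Real.logb 2 (maxWsqAt (palin g b) i) + (i : ℝ) * minEntropy g} := by
    rw [SAux.minEntropy_disjComp (palin g b) g hg0]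
    simp only [Fintype.card_fin]
  rw [h1, h2]
end

section
/- Let g be an n-variable Boolean function, b ∈ F_2, and let t ≥ 0 be an integer with t ≡ b (mod 2) such that g is t-resilient. Let g_b be the (n+1)-variable Boolean function g_b(X_{n+1}, X_n, …, X_1) = (1 ⊕ X_{n+1})·g(X_n, …, X_1) ⊕ X_{n+1}·(b ⊕ g(1⊕X_n, …, 1⊕X_1)). Then g_b is (t+1)-resilient. If moreover g is not (t+1)-resilient, then g_b is not (t+2)-resilient. -/
open Finset

lemma b2n_xor_pow (a c : Bool) :
    ((-1:ℝ)) ^ b2n (xor a c) = (-1:ℝ) ^ b2n a * (-1:ℝ) ^ b2n c := by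
  cases a <;> cases c <;> simp [b2n]

lemma bwt_eq_sum {ι : Type*} [Fintype ι] (β : ι → Bool) :
    bwt β = ∑ i, b2n (β i) := by
  unfold bwt
  rw [Finset.card_filter]
  exact Finset.sum_congr rfl fun i _ => by cases h : β i <;> simp [h, b2n]

lemma compl_ip_sum {n : ℕ} (y β : Fin n → Bool) :
    (∑ i, b2n (!y i && β i)) + ∑ i, b2n (y i && β i) = bwt β := by
  rw [bwt_eq_sum, ← Finset.sum_add_distrib]
  refine Finset.sum_congr rfl fun i _ => ?_
  cases y i <;> cases β i <;> simp [b2n]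

lemma bwt_cons {n : ℕ} (c : Bool) (y : Fin n → Bool) :
    bwt (Fin.cons c y : Fin (n+1) → Bool) = b2n c + bwt y := by
  rw [bwt_eq_sum, bwt_eq_sum, Fin.sum_univ_succ]
  simp [Fin.cons_zero, Fin.cons_succ]

lemma walsh_palin {n : ℕ} (g : (Fin n → Bool) → Bool) (b : Bool) (α : Fin (n+1) → Bool) :
    walsh (palin g b) α =
      if (b2n b + b2n (α 0) + bwt (fun i : Fin n => α i.succ)) % 2 = 0
      then walsh g (fun i => α i.succ) else 0 := by
  set β : Fin n → Bool := fun i => α i.succ with hβ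
  set ε : ℝ := (-1:ℝ) ^ (b2n b + b2n (α 0) + bwt β) with hε
  have key : ∀ y : Fin n → Bool, (-1:ℝ) ^ (∑ i, b2n (!y i && β i)) =
      (-1:ℝ) ^ (bwt β + ∑ i, b2n (y i && β i)) := by
    intro y
    have h := compl_ip_sum y β
    have h2 : (∑ i, b2n (!y i && β i)) + 2 * (∑ i, b2n (y i && β i)) =
        bwt β + ∑ i, b2n (y i && β i) := by omega
    calc (-1:ℝ) ^ (∑ i, b2n (!y i && β i))
        = (-1:ℝ) ^ ((∑ i, b2n (!y i && β i)) + 2 * (∑ i, b2n (y i && β i))) := by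
          rw [pow_add, pow_mul, neg_one_sq, one_pow, mul_one]
      _ = _ := by rw [h2]
  have hsum : ∑ x : Fin (n+1) → Bool,
      (-1:ℝ) ^ (b2n (palin g b x) + ∑ i, b2n (x i && α i))
      = (1 + ε) * ∑ y : Fin n → Bool, (-1:ℝ) ^ (b2n (g y) + ∑ i, b2n (y i && β i)) := by
    rw [← Fintype.sum_equiv (Fin.consEquiv fun _ => Bool)
        (fun p : Bool × (Fin n → Bool) =>
          (-1:ℝ) ^ (b2n (palin g b (Fin.cons p.1 p.2)) +
            ∑ i, b2n ((Fin.cons p.1 p.2 : Fin (n+1) → Bool) i && α i)))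
        _ (fun p => rfl)]
    rw [Fintype.sum_prod_type, Fintype.sum_bool]
    have hfalse : ∀ y : Fin n → Bool,
        (b2n (palin g b (Fin.cons false y)) +
          ∑ i, b2n ((Fin.cons false y : Fin (n+1) → Bool) i && α i))
        = b2n (g y) + ∑ i, b2n (y i && β i) := by
      intro y
      rw [Fin.sum_univ_succ]
      simp [palin, Fin.cons_zero, Fin.cons_succ, b2n, hβ]
    have htrue : ∑ y : Fin n → Bool,
        (-1:ℝ) ^ (b2n (palin g b (Fin.cons true y)) +
          ∑ i, b2n ((Fin.cons true y : Fin (n+1) → Bool) i && α i))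
        = ε * ∑ y : Fin n → Bool, (-1:ℝ) ^ (b2n (g y) + ∑ i, b2n (y i && β i)) := by
      have step1 : ∀ y : Fin n → Bool,
          (b2n (palin g b (Fin.cons true y)) +
            ∑ i, b2n ((Fin.cons true y : Fin (n+1) → Bool) i && α i))
          = b2n (xor b (g fun i => !y i)) + (b2n (α 0) + ∑ i, b2n (y i && β i)) := by
        intro y
        rw [Fin.sum_univ_succ]
        simp [palin, Fin.cons_zero, Fin.cons_succ, b2n, hβ]
      simp only [step1]
      have step2 : ∑ y : Fin n → Bool,
          (-1:ℝ) ^ (b2n (xor b (g fun i => !y i)) + (b2n (α 0) + ∑ i, b2n (y i && β i)))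
          = ∑ y : Fin n → Bool,
          (-1:ℝ) ^ (b2n (xor b (g y)) + (b2n (α 0) + ∑ i, b2n (!y i && β i))) := by
        refine Fintype.sum_equiv
          ⟨fun y i => !y i, fun y i => !y i, fun y => by funext i; simp,
            fun y => by funext i; simp⟩ _ _ (fun y => ?_)
        simp only [Equiv.coe_fn_mk, Bool.not_not]
      rw [step2, Finset.mul_sum]
      refine Finset.sum_congr rfl fun y _ => ?_
      rw [pow_add, pow_add, b2n_xor_pow, key y, hε, pow_add, pow_add, pow_add]
      ring
    rw [htrue]
    simp only [hfalse]
    ring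
  have hcardn : (Fintype.card (Fin n)) = n := Fintype.card_fin n
  have hcardn1 : (Fintype.card (Fin (n+1))) = n + 1 := Fintype.card_fin (n+1)
  rw [walsh, hcardn1, hsum]
  by_cases hpar : (b2n b + b2n (α 0) + bwt β) % 2 = 0
  · have : ε = 1 := Even.neg_one_pow (Nat.even_iff.mpr hpar)
    rw [if_pos hpar, this, walsh, hcardn]
    have h2 : (2:ℝ) ^ (n+1) = 2 * 2 ^ n := by ring
    rw [h2]
    have : ((2:ℝ)^n)⁻¹ ≠ 0 := by positivity
    field_simp
    ring
  · have : ε = -1 := Odd.neg_one_pow (Nat.odd_iff.mpr (by omega))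
    rw [if_neg hpar, this]
    ring

/-- If `g` is `t`-resilient with `t ≡ b (mod 2)`, then `g_b` is `(t+1)`-resilient;
if moreover `g` is not `(t+1)`-resilient, then `g_b` is not `(t+2)`-resilient. -/
theorem stmt11 {n : ℕ} (g : (Fin n → Bool) → Bool) (b : Bool) (t : ℕ)
    (hparity : t % 2 = b2n b) (hres : resilient g t) :
    resilient (palin g b) (t + 1) ∧
      (¬resilient g (t + 1) → ¬resilient (palin g b) (t + 2)) := by
  constructor
  · intro α hα
    rw [walsh_palin]
    set β : Fin n → Bool := fun i => α i.succ with hβ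
    by_cases hpar : (b2n b + b2n (α 0) + bwt β) % 2 = 0
    · rw [if_pos hpar]
      -- bwt α = b2n (α 0) + bwt β
      have hα' : bwt α = b2n (α 0) + bwt β := by
        have : α = Fin.cons (α 0) β := by
          funext i
          refine Fin.cases ?_ ?_ i
          · simp
          · intro j; simp [hβ]
        rw [this, bwt_cons]
        simp
      by_cases hle : bwt β ≤ t
      · exact hres β hle
      · exfalso
        have hα0 : α 0 = false := by
          cases h0 : α 0
          · rfl
          · exfalso; rw [hα', h0] at hα; simp [b2n] at hα; omega
        have : bwt β = t + 1 := by rw [hα', hα0] at hα; simp [b2n] at hα; omega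
        rw [hα0, this] at hpar
        cases b <;> simp [b2n] at hparity hpar <;> omega
    · rw [if_neg hpar]
  · intro hnres hcon
    apply hnres
    intro β hβle
    by_cases hle : bwt β ≤ t
    · exact hres β hle
    · have hβt : bwt β = t + 1 := by omega
      set α : Fin (n+1) → Bool := Fin.cons true β with hα
      have h1 := hcon α (by rw [hα, bwt_cons, hβt]; show 1 + (t+1) ≤ t+2; omega)
      rw [walsh_palin] at h1
      have hsucc : (fun i : Fin n => α i.succ) = β := by
        funext i; simp [hα]
      have h0 : α 0 = true := by simp [hα]
      rw [hsucc, h0, hβt] at h1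
      rw [if_pos (by cases b <;> simp [b2n] at hparity ⊢ <;> omega)] at h1
      exact h1
end

section
/- Let g be an n-variable Boolean function that is plateaued with Walsh transform values in {0, c, −c}, let b ∈ F_2, and let g_b be the (n+1)-variable Boolean function g_b(X_{n+1}, X_n, …, X_1) = (1 ⊕ X_{n+1})·g(X_n, …, X_1) ⊕ X_{n+1}·(b ⊕ g(1⊕X_n, …, 1⊕X_1)). Then g_b is plateaued with Walsh transform values in {0, c, −c}. -/
open Finset

lemma neg_one_pow_b2n_xor (u v : Bool) :
    ((-1 : ℝ)) ^ (b2n (xor u v)) = (-1) ^ (b2n u) * (-1) ^ (b2n v) := by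
  cases u <;> cases v <;> simp [b2n]

/-- If `g` is plateaued with Walsh values in `{0, c, −c}`, then so is `g_b`. -/
theorem stmt12 {n : ℕ} (g : (Fin n → Bool) → Bool) (c : ℝ)
    (hg : ∀ α : Fin n → Bool, walsh g α = 0 ∨ walsh g α = c ∨ walsh g α = -c)
    (b : Bool) :
    ∀ β : Fin (n + 1) → Bool,
      walsh (palin g b) β = 0 ∨ walsh (palin g b) β = c ∨ walsh (palin g b) β = -c := by
  intro β
  have key : walsh (palin g b) β =
      (1 + (-1 : ℝ) ^ (b2n b + b2n (β 0) + ∑ i : Fin n, b2n (β i.succ))) / 2 *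
        walsh g (fun i => β i.succ) := by
    have hnot : ∀ F : (Fin n → Bool) → ℝ,
        ∑ x : Fin n → Bool, F (fun i => !x i) = ∑ x : Fin n → Bool, F x := by
      intro F
      exact Fintype.sum_bijective (fun x : Fin n → Bool => fun i => !x i)
        (Function.Involutive.bijective (fun x => by funext i; simp)) _ _ (fun x => rfl)
    unfold walsh
    rw [← Equiv.sum_comp (Fin.consEquiv fun _ : Fin (n+1) => Bool)]
    rw [Fintype.sum_prod_type, Fintype.sum_bool]
    simp only [Fin.consEquiv_apply, Fin.sum_univ_succ, Fin.cons_zero, Fin.cons_succ,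
      palin, reduceIte, Bool.false_eq_true, if_false, Bool.true_and, Bool.false_and]
    have htrue : ∑ x : Fin n → Bool,
        (-1 : ℝ) ^ (b2n (xor b (g fun i => !x i)) + (b2n (β 0) + ∑ i, b2n (x i && β i.succ)))
        = (-1 : ℝ) ^ (b2n b + b2n (β 0) + ∑ i : Fin n, b2n (β i.succ)) *
          ∑ x : Fin n → Bool, (-1 : ℝ) ^ (b2n (g x) + ∑ i, b2n (x i && β i.succ)) := by
      rw [← hnot (fun x => (-1 : ℝ) ^ (b2n (g x) + ∑ i, b2n (x i && β i.succ)))]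
      rw [Finset.mul_sum]
      apply Finset.sum_congr rfl
      intro x _
      have h1 : ((-1 : ℝ)) ^ (∑ i, b2n (x i && β i.succ))
          = (-1 : ℝ) ^ (∑ i : Fin n, b2n (β i.succ)) *
            (-1 : ℝ) ^ (∑ i, b2n ((!x i) && β i.succ)) := by
        rw [← Finset.prod_pow_eq_pow_sum, ← Finset.prod_pow_eq_pow_sum,
          ← Finset.prod_pow_eq_pow_sum, ← Finset.prod_mul_distrib]
        apply Finset.prod_congr rfl
        intro i _
        cases hx : x i <;> cases hb : β i.succ <;> simp [hx, hb, b2n]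
      rw [pow_add, pow_add, neg_one_pow_b2n_xor, h1, pow_add, pow_add]
      ring
    have hfalse : ∀ x : Fin n → Bool,
        b2n (g fun i => x i) + (b2n false + ∑ i, b2n (x i && β i.succ))
        = b2n (g x) + ∑ i, b2n (x i && β i.succ) := by
      intro x; simp [b2n]
    simp only [hfalse]
    rw [htrue]
    have hcard : (Fintype.card (Fin (n + 1)) : ℕ) = n + 1 := by simp
    have hcard2 : (Fintype.card (Fin n) : ℕ) = n := by simp
    rw [hcard, hcard2]
    have h2 : ((2 : ℝ) ^ (n + 1))⁻¹ = ((2 : ℝ) ^ n)⁻¹ / 2 := by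
      rw [pow_succ]; field_simp
    rw [h2]
    ring
  have hs : (-1 : ℝ) ^ (b2n b + b2n (β 0) + ∑ i : Fin n, b2n (β i.succ)) = 1 ∨
      (-1 : ℝ) ^ (b2n b + b2n (β 0) + ∑ i : Fin n, b2n (β i.succ)) = -1 := by
    rcases Nat.even_or_odd (b2n b + b2n (β 0) + ∑ i : Fin n, b2n (β i.succ)) with h | h
    · left; exact h.neg_one_pow
    · right; exact h.neg_one_pow
  rcases hs with h | h
  · rw [key, h]
    norm_num
    exact hg _
  · rw [key, h]
    norm_num
end

section
/- Let g be an n-variable Boolean function, b ∈ F_2, and let g_b be the (n+1)-variable Boolean function g_b(X_{n+1}, X_n, …, X_1) = (1 ⊕ X_{n+1})·g(X_n, …, X_1) ⊕ X_{n+1}·(b ⊕ g(1⊕X_n, …, 1⊕X_1)). Then the Walsh transform of g_b is banded: W_{g_b}(β) = 0 for every β ∈ F_2^{n+1} whose Hamming weight satisfies wt(β) ≡ 1 − b (mod 2). -/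
open Finset

section helpers

private lemma m1_and_not (z a : Bool) :
    (-1:ℝ) ^ b2n (!z && a) = (-1) ^ b2n a * (-1) ^ b2n (z && a) := by
  cases z <;> cases a <;> simp [b2n]

private lemma m1_xor (a c : Bool) :
    (-1:ℝ) ^ b2n (xor a c) = (-1) ^ b2n a * (-1) ^ b2n c := by
  cases a <;> cases c <;> simp [b2n]

end helpers


/-- The Walsh transform of `g_b` is banded: it vanishes on every `β` with
`wt(β) ≡ 1 − b (mod 2)`. -/

theorem stmt13 {n : ℕ} (g : (Fin n → Bool) → Bool) (b : Bool)
    (β : Fin (n + 1) → Bool) (h : bwt β % 2 = 1 - b2n b) :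
    walsh (palin g b) β = 0 := by
  classical
  set α : Fin n → Bool := fun i => β i.succ with hα
  have hbwt : bwt β = b2n (β 0) + ∑ i : Fin n, b2n (α i) := by
    rw [bwt, Finset.card_filter, Fin.sum_univ_succ]
    simp [b2n, hα]
  have key : ∑ x : Fin (n+1) → Bool,
      (-1:ℝ) ^ (b2n (palin g b x) + ∑ i, b2n (x i && β i)) = 0 := by
    rw [← (Fin.consEquiv (fun _ : Fin (n+1) => Bool)).sum_comp]
    rw [Fintype.sum_prod_type, Fintype.sum_bool]
    simp only [show ∀ (c : Bool) (y : Fin n → Bool),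
      (Fin.consEquiv fun _ => Bool) (c, y) = Fin.cons c y from fun _ _ => rfl]
    have hpalin : ∀ (c : Bool) (y : Fin n → Bool),
        palin g b (Fin.cons c y) = if c then xor b (g fun i => !y i) else g y := by
      intro c y
      simp [palin, Fin.cons_zero, Fin.cons_succ]
    have hip : ∀ (c : Bool) (y : Fin n → Bool),
        ∑ i : Fin (n+1), b2n ((Fin.cons c y : Fin (n+1) → Bool) i && β i)
          = b2n (c && β 0) + ∑ i : Fin n, b2n (y i && α i) := by
      intro c y
      rw [Fin.sum_univ_succ]
      simp [hα]
    -- the x₀ = true part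
    have negsum : ∀ F : (Fin n → Bool) → ℝ,
        (∑ y : Fin n → Bool, F fun i => !y i) = ∑ y : Fin n → Bool, F y := by
      intro F
      apply Fintype.sum_bijective (fun (y : Fin n → Bool) i => !y i)
      · exact Function.Involutive.bijective (fun y => by funext i; simp)
      · intro y; rfl
    have hA : ∑ y : Fin n → Bool,
        (-1:ℝ) ^ (b2n (palin g b (Fin.cons true y)) +
          ∑ i, b2n ((Fin.cons true y : Fin (n+1) → Bool) i && β i))
        = ∑ z : Fin n → Bool,
            ((-1:ℝ) ^ (b2n b + b2n (β 0) + ∑ i, b2n (α i))) *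
              (-1:ℝ) ^ (b2n (g z) + ∑ i, b2n (z i && α i)) := by
      rw [← negsum (fun z => ((-1:ℝ) ^ (b2n b + b2n (β 0) + ∑ i, b2n (α i))) *
              (-1:ℝ) ^ (b2n (g z) + ∑ i, b2n (z i && α i)))]
      refine Finset.sum_congr rfl fun y _ => ?_
      rw [hpalin, hip]
      simp only [if_true, Bool.true_and, Bool.not_not]
      rw [pow_add, pow_add, m1_xor]
      rw [pow_add, pow_add, pow_add]
      rw [← Finset.prod_pow_eq_pow_sum, ← Finset.prod_pow_eq_pow_sum,
          ← Finset.prod_pow_eq_pow_sum]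
      have : ∀ i : Fin n, (-1:ℝ) ^ b2n (y i && α i)
          = (-1) ^ b2n (α i) * (-1) ^ b2n (!(y i) && α i) := by
        intro i
        rw [m1_and_not]
        cases α i <;> cases y i <;> simp [b2n]
      rw [Finset.prod_congr rfl fun i _ => this i, Finset.prod_mul_distrib]
      ring
    rw [hA]
    have hB : ∀ y : Fin n → Bool,
        (-1:ℝ) ^ (b2n (palin g b (Fin.cons false y)) +
          ∑ i, b2n ((Fin.cons false y : Fin (n+1) → Bool) i && β i))
        = (-1:ℝ) ^ (b2n (g y) + ∑ i, b2n (y i && α i)) := by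
      intro y
      rw [hpalin, hip]
      simp [b2n]
    rw [Finset.sum_congr rfl fun y _ => hB y, ← Finset.mul_sum]
    have hodd : Odd (b2n b + b2n (β 0) + ∑ i, b2n (α i)) := by
      rw [Nat.odd_iff, add_assoc, ← hbwt]
      cases b <;> simp [b2n] at h ⊢ <;> omega
    rw [hodd.neg_one_pow]
    ring
  rw [walsh, key, mul_zero]
end

section
/- Let 𝒢 be an (n,k) vectorial Boolean function and f a k-variable Boolean function. Then for every u ∈ F_2^n, W_{f∘𝒢}(u) = Σ_{v ∈ F_2^k} W_f(v) · W_{ℓ_v∘𝒢}(u), where ℓ_v∘𝒢 is the n-variable Boolean function x ↦ ⟨v, 𝒢(x)⟩. -/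
open Finset

noncomputable def sgn (b : Bool) : ℝ := if b then -1 else 1

lemma sgn_eq (b : Bool) : (-1 : ℝ) ^ (b2n b) = sgn b := by
  cases b <;> simp [b2n, sgn]

lemma neg_one_pow_mod_two (N : ℕ) : (-1 : ℝ) ^ (N % 2) = (-1 : ℝ) ^ N := by
  conv_rhs => rw [← Nat.div_add_mod N 2]
  rw [pow_add, pow_mul]
  norm_num

lemma sgn_bip {ι : Type*} [Fintype ι] (v y : ι → Bool) :
    sgn (bip v y) = ∏ i, sgn (v i && y i) := by
  have h : ∀ b : Bool, sgn b = (-1 : ℝ) ^ (b2n b) := fun b => (sgn_eq b).symm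
  rw [h, bip]
  have : b2n (decide ((∑ i, b2n (v i && y i)) % 2 = 1)) = (∑ i, b2n (v i && y i)) % 2 := by
    generalize (∑ i, b2n (v i && y i)) = N
    rcases Nat.mod_two_eq_zero_or_one N with h0 | h0 <;> rw [h0] <;> simp [b2n]
  rw [this, neg_one_pow_mod_two]
  rw [← Finset.prod_pow_eq_pow_sum]
  exact Finset.prod_congr rfl fun i _ => sgn_eq _

lemma walsh_eq {ι : Type*} [Fintype ι] [DecidableEq ι]
    (f : (ι → Bool) → Bool) (α : ι → Bool) :
    walsh f α = (2 ^ Fintype.card ι : ℝ)⁻¹ *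
      ∑ x : ι → Bool, sgn (f x) * ∏ i, sgn (x i && α i) := by
  unfold walsh
  congr 1
  refine Finset.sum_congr rfl fun x _ => ?_
  rw [pow_add, sgn_eq, ← Finset.prod_pow_eq_pow_sum]
  congr 1
  exact Finset.prod_congr rfl fun i _ => sgn_eq _

lemma orth {k : ℕ} (w y : Fin k → Bool) :
    ∑ v : Fin k → Bool, (∏ i, sgn (w i && v i)) * ∏ i, sgn (v i && y i) =
      if w = y then (2 : ℝ) ^ k else 0 := by
  have : ∀ v : Fin k → Bool,
      (∏ i, sgn (w i && v i)) * ∏ i, sgn (v i && y i)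
        = ∏ i, (sgn (w i && v i) * sgn (v i && y i)) := fun v =>
    (Finset.prod_mul_distrib).symm
  simp_rw [this]
  rw [← Fintype.prod_sum (fun (i : Fin k) (b : Bool) => sgn (w i && b) * sgn (b && y i))]
  have hfac : ∀ i : Fin k, (∑ b : Bool, sgn (w i && b) * sgn (b && y i))
      = if w i = y i then 2 else 0 := by
    intro i
    rw [Fintype.sum_bool]
    cases hw : w i <;> cases hy : y i <;> simp [sgn] <;> norm_num
  simp_rw [hfac]
  by_cases h : w = y
  · subst h
    simp
  · obtain ⟨i, hi⟩ := Function.ne_iff.mp h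
    rw [if_neg h]
    exact Finset.prod_eq_zero (Finset.mem_univ i) (if_neg hi)

lemma gen {ι : Type*} [Fintype ι] (a b S : ℝ) (Q P : ι → ℝ) :
    (a * S) * (b * ∑ x, Q x * P x) = b * ∑ x, (a * (S * Q x)) * P x := by
  rw [Finset.mul_sum, Finset.mul_sum, Finset.mul_sum]
  exact Finset.sum_congr rfl fun x _ => by ring


/-- Composition theorem of Gupta–Sarkar:
`W_{f∘𝒢}(u) = Σ_v W_f(v)·W_{ℓ_v∘𝒢}(u)` where `(ℓ_v∘𝒢)(x) = ⟨v, 𝒢(x)⟩`. -/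
theorem stmt16 {n k : ℕ} (G : (Fin n → Bool) → Fin k → Bool)
    (f : (Fin k → Bool) → Bool) (u : Fin n → Bool) :
    walsh (fun x => f (G x)) u =
      ∑ v : Fin k → Bool, walsh f v * walsh (fun x => bip v (G x)) u := by
  have hk : ((2 : ℝ) ^ k) ≠ 0 := by positivity
  have key : ∀ x : Fin n → Bool,
      sgn (f (G x)) = ((2 : ℝ) ^ k)⁻¹ * ∑ v : Fin k → Bool,
        (∑ w : Fin k → Bool, sgn (f w) * ∏ i, sgn (w i && v i)) *
          ∏ i, sgn (v i && G x i) := by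
    intro x
    have h1 : ∀ v : Fin k → Bool,
        (∑ w : Fin k → Bool, sgn (f w) * ∏ i, sgn (w i && v i)) *
          ∏ i, sgn (v i && G x i)
        = ∑ w : Fin k → Bool, sgn (f w) *
            ((∏ i, sgn (w i && v i)) * ∏ i, sgn (v i && G x i)) := by
      intro v
      rw [Finset.sum_mul]
      exact Finset.sum_congr rfl fun w _ => by ring
    simp_rw [h1]
    rw [Finset.sum_comm]
    simp_rw [← Finset.mul_sum, orth]
    rw [show (∑ w : Fin k → Bool, sgn (f w) * if w = G x then (2:ℝ)^k else 0)
        = ∑ w : Fin k → Bool, if w = G x then sgn (f w) * (2:ℝ)^k else 0 from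
      Finset.sum_congr rfl fun w _ => by split <;> simp]
    rw [Finset.sum_ite_eq' Finset.univ (G x) (fun w => sgn (f w) * (2:ℝ)^k)]
    simp only [Finset.mem_univ, if_true]
    field_simp
  simp_rw [walsh_eq, sgn_bip]
  simp only [Fintype.card_fin]
  have expand : ∀ v : Fin k → Bool,
      (((2:ℝ) ^ k)⁻¹ * ∑ w : Fin k → Bool, sgn (f w) * ∏ i, sgn (w i && v i)) *
        (((2:ℝ) ^ n)⁻¹ * ∑ x : Fin n → Bool,
          (∏ i, sgn (v i && G x i)) * ∏ j, sgn (x j && u j))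
      = ((2:ℝ) ^ n)⁻¹ * ∑ x : Fin n → Bool,
          (((2:ℝ) ^ k)⁻¹ *
            ((∑ w : Fin k → Bool, sgn (f w) * ∏ i, sgn (w i && v i)) *
              ∏ i, sgn (v i && G x i))) * ∏ j, sgn (x j && u j) := by
    intro v
    exact gen _ _ _ _ _
  rw [show (∑ v : Fin k → Bool,
      (((2:ℝ) ^ k)⁻¹ * ∑ w : Fin k → Bool, sgn (f w) * ∏ i, sgn (w i && v i)) *
        (((2:ℝ) ^ n)⁻¹ * ∑ x : Fin n → Bool,
          (∏ i, sgn (v i && G x i)) * ∏ j, sgn (x j && u j)))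
      = ∑ v : Fin k → Bool, ((2:ℝ) ^ n)⁻¹ * ∑ x : Fin n → Bool,
          (((2:ℝ) ^ k)⁻¹ *
            ((∑ w : Fin k → Bool, sgn (f w) * ∏ i, sgn (w i && v i)) *
              ∏ i, sgn (v i && G x i))) * ∏ j, sgn (x j && u j) from
    Finset.sum_congr rfl fun v _ => expand v]
  rw [← Finset.mul_sum, Finset.sum_comm]
  congr 1
  refine Finset.sum_congr rfl fun x _ => ?_
  rw [← Finset.sum_mul, ← Finset.mul_sum, ← key x]
end

section
/- Let f be a k-variable Boolean function and g a balanced l-variable Boolean function. Then Inf(f ⋄ g) = Inf(g) · Inf(f). -/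
open Finset

private lemma bal_count' {l : ℕ} (hl : 0 < l) (g : (Fin l → Bool) → Bool)
    (hg : (Finset.univ.filter fun x : Fin l → Bool => g x = true).card
      = 2 ^ (Fintype.card (Fin l) - 1)) (c : Bool) :
    (univ.filter fun u => g u = c).card = 2 ^ (l - 1) := by
  simp only [Fintype.card_fin] at hg
  cases c
  · have h2 := Finset.card_filter_add_card_filter_not (s := (univ : Finset (Fin l → Bool)))
      (p := fun u => g u = true)
    simp only [Bool.not_eq_true] at h2
    have hcard : (univ : Finset (Fin l → Bool)).card = 2 ^ l := by
      simp [Finset.card_univ, Fintype.card_fun]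
    have hpow : 2 ^ l = 2 * 2 ^ (l - 1) := by
      rw [← pow_succ']; congr 1; omega
    omega
  · exact hg

private lemma count_comp' {α β : Type*} [Fintype α] [Fintype β] [DecidableEq β]
    (F : α → β) (c : ℕ) (hF : ∀ v : β, (univ.filter fun a => F a = v).card = c)
    (p : β → Prop) [DecidablePred p] :
    (univ.filter fun a => p (F a)).card = c * (univ.filter p).card := by
  calc (univ.filter fun a => p (F a)).card
      = ∑ a : α, if p (F a) then 1 else 0 := by rw [Finset.card_filter]
    _ = ∑ a : α, ∑ v : β, if F a = v then (if p v then 1 else 0) else 0 := by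
        refine Finset.sum_congr rfl fun a _ => ?_
        simp
    _ = ∑ v : β, ∑ a : α, if F a = v then (if p v then 1 else 0) else 0 := Finset.sum_comm
    _ = ∑ v : β, if p v then (∑ a : α, if F a = v then 1 else 0) else 0 := by
        refine Finset.sum_congr rfl fun v _ => ?_
        by_cases hp : p v <;> simp [hp]
    _ = ∑ v : β, if p v then c else 0 := by
        refine Finset.sum_congr rfl fun v _ => ?_
        rw [← Finset.card_filter, hF]
    _ = c * (univ.filter p).card := by
        rw [← Finset.sum_filter, Finset.sum_const, smul_eq_mul, mul_comm]

private lemma card_split' {ι β : Type*} [Fintype ι] [DecidableEq ι] [Fintype β] [DecidableEq β]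
    [Inhabited β] (i : ι)
    (p : β → Prop) [DecidablePred p] (q : (ι → β) → Prop) [DecidablePred q]
    (hq : ∀ (h : ι → β) (b : β), q (Function.update h i b) ↔ q h) :
    (univ.filter fun h : ι → β => p (h i) ∧ q h).card * Fintype.card β =
      (univ.filter p).card * (univ.filter fun h : ι → β => q h).card := by
  classical
  set e := Equiv.funSplitAt i β with he
  set q2 : ({ j // j ≠ i } → β) → Prop := fun z => q (e.symm (default, z)) with hq2
  have hsymm : ∀ (b : β) (z : { j // j ≠ i } → β),
      e.symm (b, z) = Function.update (e.symm (default, z)) i b := by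
    intro b z
    funext m
    by_cases hm : m = i
    · subst hm; simp [he, Equiv.funSplitAt, Equiv.piSplitAt]
    · simp [he, Equiv.funSplitAt, Equiv.piSplitAt, hm, Function.update_of_ne hm]
  have hqq : ∀ (b : β) (z : { j // j ≠ i } → β), q (e.symm (b, z)) ↔ q2 z := by
    intro b z
    rw [hsymm b z, hq]
  have key : ∀ (h : ι → β), q h ↔ q2 (fun m => h m) := by
    intro h
    have h1 : h = e.symm (h i, fun m => h m) := by
      have := e.left_inv h
      simpa [he] using this.symm
    conv_lhs => rw [h1]
    exact hqq _ _
  have h1 : (univ.filter fun h : ι → β => p (h i) ∧ q h).card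
      = (univ.filter p).card * (univ.filter q2).card := by
    rw [← Fintype.card_subtype, ← Fintype.card_subtype, ← Fintype.card_subtype,
      ← Fintype.card_prod]
    refine Fintype.card_congr ?_
    refine (Equiv.subtypeEquiv e fun h => ?_).trans (Equiv.subtypeProdEquivProd)
    constructor
    · rintro ⟨hp, hqh⟩; exact ⟨hp, (key h).1 hqh⟩
    · rintro ⟨hp, hqh⟩; exact ⟨hp, (key h).2 hqh⟩
  have h2 : (univ.filter fun h : ι → β => q h).card
      = Fintype.card β * (univ.filter q2).card := by
    rw [← Fintype.card_subtype, ← Fintype.card_subtype, ← Fintype.card_prod]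
    refine Fintype.card_congr ?_
    refine (Equiv.subtypeEquiv (p := fun h : ι → β => q h)
        (q := fun s : β × ({ j // j ≠ i } → β) => q2 s.2) e fun h => key h).trans
      (((Equiv.subtypeEquivRight fun s : β × ({ j // j ≠ i } → β) =>
          (and_iff_right trivial).symm).trans
        (Equiv.subtypeProdEquivProd (p := fun _ : β => True) (q := q2))).trans
          (Equiv.prodCongrLeft fun _ => Equiv.subtypeUnivEquiv fun _ => trivial))
  rw [h1, h2]; ring

private lemma fiber_count' {k l : ℕ} (g : (Fin l → Bool) → Bool)
    (hbal : ∀ c : Bool, (univ.filter fun u => g u = c).card = 2 ^ (l - 1))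
    (v : Fin k → Bool) :
    (univ.filter fun h : Fin k → Fin l → Bool => (fun m => g (h m)) = v).card
      = 2 ^ ((l - 1) * k) := by
  rw [← Fintype.card_subtype]
  have e1 : {h : Fin k → Fin l → Bool // (fun m => g (h m)) = v}
      ≃ ∀ m : Fin k, {w : Fin l → Bool // g w = v m} :=
    (Equiv.subtypeEquivRight fun h => funext_iff).trans
      (Equiv.subtypePiEquivPi (p := fun (m : Fin k) (w : Fin l → Bool) => g w = v m))
  rw [Fintype.card_congr e1, Fintype.card_pi]
  have hc : ∀ m : Fin k, Fintype.card {w : Fin l → Bool // g w = v m} = 2 ^ (l - 1) := by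
    intro m
    rw [Fintype.card_subtype, hbal]
  simp only [hc, Finset.prod_const, Finset.card_univ, Fintype.card_fin, ← pow_mul]

private lemma sens_iff' {k : ℕ} (f : (Fin k → Bool) → Bool) (i : Fin k)
    (y : Fin k → Bool) (c : Bool) :
    (f y ≠ f (Function.update y i c)) ↔
      (y i ≠ c ∧ f y ≠ f (Function.update y i (!y i))) := by
  by_cases hc : c = y i
  · subst hc; simp [Function.update_eq_self]
  · have hc' : c = !(y i) := by cases c <;> cases h : y i <;> simp_all
    subst hc'
    simp only [ne_eq, eq_comm (a := y i)]
    tauto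

private lemma Q_indep' {k : ℕ} (f : (Fin k → Bool) → Bool) (i : Fin k)
    (y : Fin k → Bool) (c : Bool) :
    (f (Function.update y i c) ≠ f (Function.update (Function.update y i c) i (!c))) ↔
      (f y ≠ f (Function.update y i (!y i))) := by
  rw [Function.update_idem]
  by_cases hc : c = y i
  · subst hc; simp [Function.update_eq_self]
  · have hc' : c = !(y i) := by cases c <;> cases h : y i <;> simp_all
    subst hc'
    rw [Bool.not_not, Function.update_eq_self]
    exact ne_comm

private lemma key_iff' {k l : ℕ} (f : (Fin k → Bool) → Bool) (g : (Fin l → Bool) → Bool)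
    (i : Fin k) (j : Fin l) (x : Fin k × Fin l → Bool) :
    (disjComp f g x ≠ disjComp f g (Function.update x (i, j) (!x (i, j)))) ↔
      ((g (fun j' => x (i, j')) ≠
          g (Function.update (fun j' => x (i, j')) j (!(fun j' => x (i, j')) j))) ∧
        (f (fun m => g fun j' => x (m, j')) ≠
          f (Function.update (fun m => g fun j' => x (m, j')) i
              (!(fun m => g fun j' => x (m, j')) i)))) := by
  have hupd : (fun m => g fun j' => Function.update x (i, j) (!x (i, j)) (m, j'))
      = Function.update (fun m => g fun j' => x (m, j')) i
          (g (Function.update (fun j' => x (i, j')) j (!x (i, j)))) := by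
    funext m
    by_cases hm : m = i
    · subst hm
      rw [Function.update_self]
      congr 1
      funext j'
      by_cases hj : j' = j
      · subst hj; simp [Function.update]
      · have hne : ((m, j') : Fin k × Fin l) ≠ (m, j) := by simp [Prod.ext_iff, hj]
        rw [Function.update_of_ne hne, Function.update_of_ne hj]
    · rw [Function.update_of_ne hm]
      congr 1
      funext j'
      have hne : ((m, j') : Fin k × Fin l) ≠ (i, j) := by simp [Prod.ext_iff, hm]
      rw [Function.update_of_ne hne]
  show (f _ ≠ f _) ↔ _
  rw [hupd]
  exact sens_iff' f i _ _

private lemma core' {k l : ℕ} (f : (Fin k → Bool) → Bool) (g : (Fin l → Bool) → Bool)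
    (hbal : ∀ c : Bool, (univ.filter fun u => g u = c).card = 2 ^ (l - 1))
    (i : Fin k) (j : Fin l) :
    (univ.filter fun x : Fin k × Fin l → Bool =>
        disjComp f g x ≠ disjComp f g (Function.update x (i, j) (!x (i, j)))).card * 2 ^ l
    = (univ.filter fun u : Fin l → Bool => g u ≠ g (Function.update u j (!u j))).card
      * (2 ^ ((l - 1) * k)
        * (univ.filter fun y : Fin k → Bool => f y ≠ f (Function.update y i (!y i))).card) := by
  classical
  set p : (Fin l → Bool) → Prop := fun u => g u ≠ g (Function.update u j (!u j)) with hp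
  set q : (Fin k → Fin l → Bool) → Prop := fun h =>
    f (fun m => g (h m)) ≠
      f (Function.update (fun m => g (h m)) i (!(fun m => g (h m)) i)) with hqdef
  have hcardC : (univ.filter fun x : Fin k × Fin l → Bool =>
      disjComp f g x ≠ disjComp f g (Function.update x (i, j) (!x (i, j)))).card
      = (univ.filter fun h : Fin k → Fin l → Bool => p (h i) ∧ q h).card := by
    rw [← Fintype.card_subtype, ← Fintype.card_subtype]
    refine Fintype.card_congr
      (Equiv.subtypeEquiv (Equiv.curry (Fin k) (Fin l) Bool) fun x => ?_)
    exact key_iff' f g i j x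
  have hq : ∀ (h : Fin k → Fin l → Bool) (b : Fin l → Bool),
      q (Function.update h i b) ↔ q h := by
    intro h b
    have hY : (fun m => g (Function.update h i b m))
        = Function.update (fun m => g (h m)) i (g b) := by
      funext m
      by_cases hm : m = i
      · subst hm; rw [Function.update_self, Function.update_self]
      · rw [Function.update_of_ne hm, Function.update_of_ne hm]
    show (f _ ≠ f _) ↔ (f _ ≠ f _)
    simp only [hY, Function.update_self]
    exact Q_indep' f i _ _
  have hsplit := card_split' i p q hq
  have hqcount : (univ.filter fun h : Fin k → Fin l → Bool => q h).card
      = 2 ^ ((l - 1) * k)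
        * (univ.filter fun y : Fin k → Bool => f y ≠ f (Function.update y i (!y i))).card := by
    exact count_comp' (fun (h : Fin k → Fin l → Bool) => fun m => g (h m))
      (2 ^ ((l - 1) * k)) (fiber_count' g hbal)
      (fun y : Fin k → Bool => f y ≠ f (Function.update y i (!y i)))
  rw [hcardC]
  have hcardβ : Fintype.card (Fin l → Bool) = 2 ^ l := by
    simp [Fintype.card_fun]
  rw [← hcardβ, hsplit, hqcount]


/-- Influence of a disjoint composition with balanced inner function:
`Inf(f ⋄ g) = Inf(g)·Inf(f)`. -/
theorem stmt17 {k l : ℕ} (hk : 0 < k) (hl : 0 < l)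
    (f : (Fin k → Bool) → Bool) (g : (Fin l → Bool) → Bool) (hg : balanced g) :
    influence (disjComp f g) = influence g * influence f := by
  classical
  have hbal : ∀ c : Bool, (univ.filter fun u => g u = c).card = 2 ^ (l - 1) :=
    bal_count' hl g hg
  obtain ⟨l', rfl⟩ : ∃ l', l = l' + 1 := ⟨l - 1, by omega⟩
  have hnat : (l' + 1 - 1) * k + k = k * (l' + 1) := by
    simp only [Nat.add_sub_cancel]; ring
  have key : ∀ (i : Fin k) (j : Fin (l' + 1)),
      ((univ.filter fun x : Fin k × Fin (l' + 1) → Bool =>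
          disjComp f g x ≠ disjComp f g (Function.update x (i, j) (!x (i, j)))).card : ℝ)
        / 2 ^ (k * (l' + 1))
      = (((univ.filter fun u : Fin (l' + 1) → Bool =>
            g u ≠ g (Function.update u j (!u j))).card : ℝ) / 2 ^ (l' + 1))
        * (((univ.filter fun y : Fin k → Bool =>
            f y ≠ f (Function.update y i (!y i))).card : ℝ) / 2 ^ k) := by
    intro i j
    have hcore := core' f g hbal i j
    have hcast : ((univ.filter fun x : Fin k × Fin (l' + 1) → Bool =>
          disjComp f g x ≠ disjComp f g (Function.update x (i, j) (!x (i, j)))).card : ℝ)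
        * 2 ^ (l' + 1)
        = ((univ.filter fun u : Fin (l' + 1) → Bool =>
            g u ≠ g (Function.update u j (!u j))).card : ℝ)
          * (2 ^ ((l' + 1 - 1) * k)
            * ((univ.filter fun y : Fin k → Bool =>
                f y ≠ f (Function.update y i (!y i))).card : ℝ)) := by
      exact_mod_cast congrArg (Nat.cast : ℕ → ℝ) hcore
    rw [div_mul_div_comm, div_eq_div_iff (by positivity) (by positivity)]
    calc ((univ.filter fun x : Fin k × Fin (l' + 1) → Bool =>
          disjComp f g x ≠ disjComp f g (Function.update x (i, j) (!x (i, j)))).card : ℝ)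
        * (2 ^ (l' + 1) * 2 ^ k)
        = (((univ.filter fun x : Fin k × Fin (l' + 1) → Bool =>
          disjComp f g x ≠ disjComp f g (Function.update x (i, j) (!x (i, j)))).card : ℝ)
          * 2 ^ (l' + 1)) * 2 ^ k := by ring
      _ = ((univ.filter fun u : Fin (l' + 1) → Bool =>
            g u ≠ g (Function.update u j (!u j))).card : ℝ)
          * ((univ.filter fun y : Fin k → Bool =>
              f y ≠ f (Function.update y i (!y i))).card : ℝ)
          * (2 ^ ((l' + 1 - 1) * k) * 2 ^ k) := by rw [hcast]; ring
      _ = ((univ.filter fun u : Fin (l' + 1) → Bool =>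
            g u ≠ g (Function.update u j (!u j))).card : ℝ)
          * ((univ.filter fun y : Fin k → Bool =>
              f y ≠ f (Function.update y i (!y i))).card : ℝ)
          * 2 ^ (k * (l' + 1)) := by rw [← pow_add, hnat]
  unfold influence
  simp only [Fintype.card_prod, Fintype.card_fin]
  rw [Fintype.sum_prod_type, Finset.sum_mul_sum, Finset.sum_comm]
  refine Finset.sum_congr rfl fun j _ => Finset.sum_congr rfl fun i _ => ?_
  exact key i j
end

section
/- Let f be a k-variable Boolean function and g a balanced l-variable Boolean function. Then H(f ⋄ g) = H(f) + H(g) · Inf(f). -/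
open Finset

set_option linter.unusedSectionVars false

namespace S18

noncomputable def sg (b : Bool) : ℝ := (-1 : ℝ) ^ b2n b

@[simp] lemma sg_false : sg false = 1 := rfl
@[simp] lemma sg_true : sg true = -1 := by simp [sg, b2n]

lemma sg_sq (b : Bool) : sg b * sg b = 1 := by cases b <;> simp

variable {ι : Type*} [Fintype ι] [DecidableEq ι]

lemma walsh_eq (f : (ι → Bool) → Bool) (α : ι → Bool) :
    walsh f α = (2 ^ Fintype.card ι : ℝ)⁻¹ *
      ∑ x : ι → Bool, sg (f x) * ∏ i, sg (x i && α i) := by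
  unfold walsh
  congr 1
  refine Finset.sum_congr rfl fun x _ => ?_
  rw [pow_add, ← Finset.prod_pow_eq_pow_sum]
  rfl

lemma sum_pi_prod {V R : Type*} [Fintype V] [DecidableEq V] [CommSemiring R]
    (h : ι → V → R) : ∑ y : ι → V, ∏ i, h i (y i) = ∏ i, ∑ v : V, h i v := by
  rw [← Fintype.piFinset_univ, ← Finset.prod_univ_sum]

lemma sum_chi (z : ι → Bool) :
    ∑ x : ι → Bool, ∏ i, sg (x i && z i)
      = if z = (fun _ => false) then (2 ^ Fintype.card ι : ℝ) else 0 := by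
  have h := sum_pi_prod (fun i (v : Bool) => sg (v && z i))
  rw [h]
  by_cases hz : z = fun _ => false
  · subst hz
    simp [Finset.prod_const, Finset.card_univ]
  · rw [if_neg hz]
    obtain ⟨i, hi⟩ : ∃ i, z i = true := by
      by_contra hc
      push_neg at hc
      exact hz (funext fun i => by simpa using hc i)
    refine Finset.prod_eq_zero (Finset.mem_univ i) ?_
    simp [hi]

lemma sum_chi' (z : ι → Bool) :
    ∑ x : ι → Bool, ∏ i, sg (z i && x i)
      = if z = (fun _ => false) then (2 ^ Fintype.card ι : ℝ) else 0 := by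
  rw [← sum_chi z]
  refine Finset.sum_congr rfl fun x _ => Finset.prod_congr rfl fun i _ => ?_
  rw [Bool.and_comm]

lemma sg_and_mul_sg_and (a b c : Bool) :
    sg (a && c) * sg (b && c) = sg ((xor a b) && c) := by
  cases a <;> cases b <;> cases c <;> simp

lemma sum_eq_pow_mul_walsh (f : (ι → Bool) → Bool) (α : ι → Bool) :
    ∑ x : ι → Bool, sg (f x) * ∏ i, sg (x i && α i)
      = (2 ^ Fintype.card ι : ℝ) * walsh f α := by
  rw [walsh_eq, ← mul_assoc, mul_inv_cancel₀ (pow_ne_zero _ two_ne_zero), one_mul]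

lemma walsh_inversion (f : (ι → Bool) → Bool) (x : ι → Bool) :
    ∑ α : ι → Bool, walsh f α * ∏ i, sg (x i && α i) = sg (f x) := by
  have key : ∀ y : ι → Bool,
      ∑ α : ι → Bool, ∏ i, (sg (y i && α i) * sg (x i && α i))
        = if y = x then (2 ^ Fintype.card ι : ℝ) else 0 := by
    intro y
    have h1 : ∀ α : ι → Bool, ∏ i, (sg (y i && α i) * sg (x i && α i))
        = ∏ i, sg ((fun i => xor (y i) (x i)) i && α i) :=
      fun α => Finset.prod_congr rfl fun i _ => sg_and_mul_sg_and _ _ _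
    rw [Finset.sum_congr rfl fun α _ => h1 α, sum_chi' (fun i => xor (y i) (x i))]
    congr 1
    simp only [eq_iff_iff, funext_iff]
    exact forall_congr' fun j => by cases y j <;> cases x j <;> simp
  calc ∑ α : ι → Bool, walsh f α * ∏ i, sg (x i && α i)
      = ∑ α : ι → Bool, ((2 ^ Fintype.card ι : ℝ)⁻¹ *
          ∑ y : ι → Bool, sg (f y) * ∏ i, sg (y i && α i)) * ∏ i, sg (x i && α i) := by
        refine Finset.sum_congr rfl fun α _ => ?_; rw [walsh_eq]
    _ = (2 ^ Fintype.card ι : ℝ)⁻¹ * ∑ y : ι → Bool, sg (f y) *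
          ∑ α : ι → Bool, ∏ i, (sg (y i && α i) * sg (x i && α i)) := by
        simp only [Finset.sum_mul, Finset.mul_sum, Finset.prod_mul_distrib]
        rw [Finset.sum_comm]
        exact Finset.sum_congr rfl fun y _ => Finset.sum_congr rfl fun α _ => by ring
    _ = (2 ^ Fintype.card ι : ℝ)⁻¹ * ∑ y : ι → Bool, sg (f y) *
          (if y = x then (2 ^ Fintype.card ι : ℝ) else 0) := by
        rw [Finset.sum_congr rfl fun y _ => by rw [key y]]
    _ = sg (f x) := by
        rw [Finset.sum_congr rfl fun y _ => mul_ite (y = x) (sg (f y)) _ _]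
        simp only [mul_zero, Finset.sum_ite_eq', Finset.mem_univ, if_true]
        field_simp

lemma walsh_parseval (f : (ι → Bool) → Bool) :
    ∑ α : ι → Bool, (walsh f α) ^ 2 = 1 := by
  calc ∑ α : ι → Bool, (walsh f α) ^ 2
      = ∑ α : ι → Bool, ((2 ^ Fintype.card ι : ℝ)⁻¹ *
          ∑ x : ι → Bool, sg (f x) * ∏ i, sg (x i && α i)) * walsh f α := by
        refine Finset.sum_congr rfl fun α _ => ?_
        rw [pow_two]
        congr 1
        exact walsh_eq f α
    _ = (2 ^ Fintype.card ι : ℝ)⁻¹ * ∑ x : ι → Bool, sg (f x) *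
          ∑ α : ι → Bool, walsh f α * ∏ i, sg (x i && α i) := by
        simp only [Finset.sum_mul, Finset.mul_sum]
        rw [Finset.sum_comm]
        exact Finset.sum_congr rfl fun x _ => Finset.sum_congr rfl fun α _ => by ring
    _ = (2 ^ Fintype.card ι : ℝ)⁻¹ * ∑ x : ι → Bool, (1 : ℝ) := by
        congr 1
        refine Finset.sum_congr rfl fun x _ => ?_
        rw [walsh_inversion]
        exact sg_sq _
    _ = 1 := by
        simp [Finset.card_univ, Fintype.card_fun]

lemma sg_eq (b : Bool) : sg b = 1 - 2 * (if b = true then (1:ℝ) else 0) := by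
  cases b <;> simp <;> norm_num

lemma walsh_zero_of_balanced (g : (ι → Bool) → Bool) (hg : balanced g)
    (h0 : 0 < Fintype.card ι) : walsh g (fun _ => false) = 0 := by
  rw [walsh_eq]
  have h1 : ∑ x : ι → Bool, sg (g x) * ∏ i, sg (x i && (fun _ : ι => false) i)
      = ∑ x : ι → Bool, (1 - 2 * (if g x = true then (1:ℝ) else 0)) := by
    refine Finset.sum_congr rfl fun x _ => ?_
    simp [sg_eq]
  rw [h1]
  rw [Finset.sum_sub_distrib, Finset.sum_const, ← Finset.mul_sum, Finset.sum_boole]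
  rw [Finset.card_univ, Fintype.card_fun, Fintype.card_bool]
  unfold balanced at hg
  rw [hg]
  have h2 : (2:ℝ) ^ Fintype.card ι = 2 * 2 ^ (Fintype.card ι - 1) := by
    rw [← pow_succ']
    congr 1
    omega
  simp only [nsmul_eq_mul, mul_one]
  push_cast
  rw [h2]
  ring

lemma sg_update (y : ι → Bool) (i : ι) (α : ι → Bool) (j : ι) :
    sg (Function.update y i (!y i) j && α j)
      = (if j = i then sg (α i) else 1) * sg (y j && α j) := by
  by_cases h : j = i
  · subst h
    rw [Function.update_self, if_pos rfl]
    cases y j <;> cases α j <;> simp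
  · rw [Function.update_of_ne h, if_neg h, one_mul]

lemma prod_sg_update (y : ι → Bool) (i : ι) (α : ι → Bool) :
    ∏ j, sg (Function.update y i (!y i) j && α j)
      = sg (α i) * ∏ j, sg (y j && α j) := by
  rw [Finset.prod_congr rfl fun j _ => sg_update y i α j, Finset.prod_mul_distrib]
  congr 1
  rw [Finset.prod_ite_eq' Finset.univ i (fun _ => sg (α i))]
  simp

lemma update_involutive (i : ι) :
    Function.Involutive (fun x : ι → Bool => Function.update x i (!x i)) := by
  intro x
  funext j
  by_cases h : j = i
  · subst h
    simp [Function.update_self]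
  · simp [Function.update_of_ne h]

lemma influence_term (f : (ι → Bool) → Bool) (i : ι) :
    ∑ x : ι → Bool, sg (f x) * sg (f (Function.update x i (!x i)))
      = (2 ^ Fintype.card ι : ℝ) * ∑ α : ι → Bool, sg (α i) * (walsh f α) ^ 2 := by
  have hinv := update_involutive (ι := ι) i
  calc ∑ x : ι → Bool, sg (f x) * sg (f (Function.update x i (!x i)))
      = ∑ x : ι → Bool, sg (f (Function.update x i (!x i))) *
          ∑ α : ι → Bool, walsh f α * ∏ j, sg (x j && α j) := by
        refine Finset.sum_congr rfl fun x _ => ?_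
        rw [walsh_inversion]
        ring
    _ = ∑ α : ι → Bool, walsh f α *
          ∑ x : ι → Bool, sg (f (Function.update x i (!x i))) * ∏ j, sg (x j && α j) := by
        simp only [Finset.mul_sum]
        rw [Finset.sum_comm]
        exact Finset.sum_congr rfl fun x _ => Finset.sum_congr rfl fun α _ => by ring
    _ = ∑ α : ι → Bool, walsh f α *
          ∑ y : ι → Bool, sg (f y) *
            ∏ j, sg (Function.update y i (!y i) j && α j) := by
        refine Finset.sum_congr rfl fun α _ => ?_
        congr 1
        rw [← hinv.bijective.sum_comp
          (fun y => sg (f y) * ∏ j, sg (Function.update y i (!y i) j && α j))]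
        refine Finset.sum_congr rfl fun x _ => ?_
        rw [show (Function.update (Function.update x i (!x i)) i
          (!Function.update x i (!x i) i)) = x from hinv x]
    _ = ∑ α : ι → Bool, walsh f α * (sg (α i) * ((2 ^ Fintype.card ι : ℝ) * walsh f α)) := by
        refine Finset.sum_congr rfl fun α _ => ?_
        congr 1
        calc ∑ y : ι → Bool, sg (f y) * ∏ j, sg (Function.update y i (!y i) j && α j)
            = sg (α i) * ∑ y : ι → Bool, sg (f y) * ∏ j, sg (y j && α j) := by
              rw [Finset.mul_sum]
              refine Finset.sum_congr rfl fun y _ => ?_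
              rw [prod_sg_update y i α]
              ring
          _ = sg (α i) * ((2 ^ Fintype.card ι : ℝ) * walsh f α) := by
              rw [sum_eq_pow_mul_walsh]
    _ = (2 ^ Fintype.card ι : ℝ) * ∑ α : ι → Bool, sg (α i) * (walsh f α) ^ 2 := by
        rw [Finset.mul_sum]
        exact Finset.sum_congr rfl fun α _ => by ring

lemma influence_card (f : (ι → Bool) → Bool) (i : ι) :
    ((Finset.univ.filter fun x : ι → Bool =>
       f x ≠ f (Function.update x i (!x i))).card : ℝ)
      = (2 ^ Fintype.card ι : ℝ) * ∑ α : ι → Bool, (b2n (α i) : ℝ) * (walsh f α) ^ 2 := by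
  have h1 : ∑ x : ι → Bool, sg (f x) * sg (f (Function.update x i (!x i)))
      = (2 ^ Fintype.card ι : ℝ) - 2 * ((Finset.univ.filter fun x : ι → Bool =>
          f x ≠ f (Function.update x i (!x i))).card : ℝ) := by
    have h2 : ∀ x : ι → Bool, sg (f x) * sg (f (Function.update x i (!x i)))
        = 1 - 2 * (if f x ≠ f (Function.update x i (!x i)) then (1:ℝ) else 0) := by
      intro x
      cases hfx : f x <;> cases hfy : f (Function.update x i (!x i)) <;>
        simp [hfx, hfy] <;> norm_num
    rw [Finset.sum_congr rfl fun x _ => h2 x]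
    rw [Finset.sum_sub_distrib, Finset.sum_const, ← Finset.mul_sum, Finset.sum_boole]
    simp [Finset.card_univ, Fintype.card_fun]
  have h3 := influence_term f i
  rw [h1] at h3
  have h4 : ∀ b : Bool, (b2n b : ℝ) = (1 - sg b) / 2 := by
    intro b; cases b <;> simp [b2n]
  have h5 : ∑ α : ι → Bool, (b2n (α i) : ℝ) * (walsh f α) ^ 2
      = (∑ α : ι → Bool, (walsh f α) ^ 2
          - ∑ α : ι → Bool, sg (α i) * (walsh f α) ^ 2) / 2 := by
    rw [← Finset.sum_sub_distrib]
    rw [Finset.sum_div]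
    refine Finset.sum_congr rfl fun α _ => ?_
    rw [h4]
    ring
  rw [h5, walsh_parseval]
  linarith

lemma bwt_cast (α : ι → Bool) : (bwt α : ℝ) = ∑ i, (b2n (α i) : ℝ) := by
  unfold bwt
  rw [Finset.card_filter]
  push_cast
  refine Finset.sum_congr rfl fun i _ => ?_
  unfold b2n
  by_cases h : α i = true <;> simp [h]

lemma influence_eq (f : (ι → Bool) → Bool) :
    influence f = ∑ α : ι → Bool, (bwt α : ℝ) * (walsh f α) ^ 2 := by
  unfold influence
  have hne : (2 ^ Fintype.card ι : ℝ) ≠ 0 := pow_ne_zero _ two_ne_zero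
  calc ∑ i : ι, ((Finset.univ.filter fun x : ι → Bool =>
          f x ≠ f (Function.update x i (!x i))).card : ℝ) / 2 ^ Fintype.card ι
      = ∑ i : ι, ∑ α : ι → Bool, (b2n (α i) : ℝ) * (walsh f α) ^ 2 := by
        refine Finset.sum_congr rfl fun i _ => ?_
        rw [influence_card f i]
        field_simp
    _ = ∑ α : ι → Bool, ∑ i : ι, (b2n (α i) : ℝ) * (walsh f α) ^ 2 := Finset.sum_comm
    _ = ∑ α : ι → Bool, (bwt α : ℝ) * (walsh f α) ^ 2 := by
        refine Finset.sum_congr rfl fun α _ => ?_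
        rw [← Finset.sum_mul, ← bwt_cast]

section Comp

variable {κ : Type*} [Fintype κ] [DecidableEq κ]

def blk (α : ι × κ → Bool) (i : ι) : κ → Bool := fun j => α (i, j)

def pat [Fintype κ] [DecidableEq κ] (α : ι × κ → Bool) : ι → Bool :=
  fun i => decide ¬(blk α i = fun _ => false)

noncomputable def wfac (g : (κ → Bool) → Bool) (γ : κ → Bool) : ℝ :=
  if γ = (fun _ => false) then 1 else walsh g γ

lemma sum_blocks (h : ι → (κ → Bool) → ℝ) :
    ∑ x : ι × κ → Bool, ∏ i, h i (blk x i) = ∏ i, ∑ z : κ → Bool, h i z := by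
  rw [← sum_pi_prod h]
  exact Fintype.sum_equiv (Equiv.curry ι κ Bool) _ _ (fun x => rfl)

lemma walsh_disjComp (f : (ι → Bool) → Bool) (g : (κ → Bool) → Bool)
    (hg0 : walsh g (fun _ => false) = 0) (α : ι × κ → Bool) :
    walsh (disjComp f g) α = walsh f (pat α) * ∏ i, wfac g (blk α i) := by
  have hT : ∀ (β : ι → Bool) (i : ι),
      ∑ z : κ → Bool, sg (g z && β i) * ∏ j, sg (z j && blk α i j)
        = (2 ^ Fintype.card κ : ℝ) *
          (if β i = true then walsh g (blk α i)
           else if blk α i = (fun _ => false) then 1 else 0) := by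
    intro β i
    cases hβ : β i
    · simp only [Bool.and_false, sg_false, one_mul]
      rw [sum_chi (blk α i)]
      by_cases h : blk α i = (fun _ => false) <;> simp [h]
    · simp only [Bool.and_true]
      rw [sum_eq_pow_mul_walsh g (blk α i)]
      simp
  calc walsh (disjComp f g) α
      = (2 ^ Fintype.card (ι × κ) : ℝ)⁻¹ *
          ∑ x : ι × κ → Bool, sg (disjComp f g x) * ∏ p, sg (x p && α p) := walsh_eq _ _
    _ = (2 ^ Fintype.card (ι × κ) : ℝ)⁻¹ *
          ∑ x : ι × κ → Bool, ∑ β : ι → Bool, walsh f β *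
            ∏ i, (sg (g (blk x i) && β i) * ∏ j, sg (blk x i j && blk α i j)) := by
        congr 1
        refine Finset.sum_congr rfl fun x _ => ?_
        have hx : sg (disjComp f g x) = ∑ β : ι → Bool, walsh f β *
            ∏ i, sg (g (blk x i) && β i) := (walsh_inversion f (fun i => g (blk x i))).symm
        rw [hx, Finset.sum_mul]
        refine Finset.sum_congr rfl fun β _ => ?_
        rw [mul_assoc]
        congr 1
        rw [Fintype.prod_prod_type (fun p => sg (x p && α p)), ← Finset.prod_mul_distrib]
        rfl
    _ = (2 ^ Fintype.card (ι × κ) : ℝ)⁻¹ * ∑ β : ι → Bool, walsh f β *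
          ((2 ^ Fintype.card κ : ℝ) ^ Fintype.card ι *
            ∏ i, (if β i = true then walsh g (blk α i)
              else if blk α i = (fun _ => false) then 1 else 0)) := by
        rw [Finset.sum_comm]
        congr 1
        refine Finset.sum_congr rfl fun β _ => ?_
        rw [← Finset.mul_sum]
        congr 1
        rw [sum_blocks (fun i z => sg (g z && β i) * ∏ j, sg (z j && blk α i j))]
        rw [Finset.prod_congr rfl fun i _ => hT β i, Finset.prod_mul_distrib]
        congr 1
        rw [Finset.prod_const, Finset.card_univ]
    _ = ∑ β : ι → Bool, walsh f β *
          ∏ i, (if β i = true then walsh g (blk α i)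
            else if blk α i = (fun _ => false) then 1 else 0) := by
        have hP : ((2:ℝ) ^ Fintype.card κ) ^ Fintype.card ι = 2 ^ Fintype.card (ι × κ) := by
          rw [← pow_mul, Fintype.card_prod, mul_comm]
        have hc : (2:ℝ) ^ Fintype.card (ι × κ) ≠ 0 := pow_ne_zero _ two_ne_zero
        rw [hP, Finset.mul_sum]
        refine Finset.sum_congr rfl fun β _ => ?_
        field_simp
    _ = ∑ β : ι → Bool, walsh f β *
          (if β = pat α then ∏ i, wfac g (blk α i) else 0) := by
        refine Finset.sum_congr rfl fun β _ => ?_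
        congr 1
        by_cases hβ : β = pat α
        · subst hβ
          rw [if_pos rfl]
          refine Finset.prod_congr rfl fun i _ => ?_
          unfold pat wfac
          by_cases h : blk α i = (fun _ => false) <;> simp [h]
        · rw [if_neg hβ]
          obtain ⟨i, hi⟩ : ∃ i, β i ≠ pat α i := by
            by_contra hc
            push_neg at hc
            exact hβ (funext hc)
          refine Finset.prod_eq_zero (Finset.mem_univ i) ?_
          unfold pat at hi
          by_cases h : blk α i = (fun _ => false)
          · have : β i = true := by
              simp [h] at hi
              exact hi
            rw [this, if_pos rfl, h, hg0]
          · have : β i = false := by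
              simp [h] at hi
              exact hi
            rw [this]
            simp [h]
    _ = walsh f (pat α) * ∏ i, wfac g (blk α i) := by
        rw [Finset.sum_congr rfl fun β _ => mul_ite (β = pat α) (walsh f β) _ _]
        simp only [mul_zero, Finset.sum_ite_eq', Finset.mem_univ, if_true]

noncomputable def E (x : ℝ) : ℝ := x ^ 2 * Real.logb 2 (1 / x ^ 2)

@[simp] lemma E_zero : E 0 = 0 := by simp [E]

@[simp] lemma E_one : E 1 = 0 := by simp [E]

lemma E_mul (x y : ℝ) : E (x * y) = x ^ 2 * E y + y ^ 2 * E x := by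
  by_cases hx : x = 0
  · simp [hx]
  by_cases hy : y = 0
  · simp [hy]
  unfold E
  rw [mul_pow, one_div, one_div, one_div, mul_inv,
    Real.logb_mul (inv_ne_zero (pow_ne_zero 2 hx)) (inv_ne_zero (pow_ne_zero 2 hy))]
  ring

lemma E_prod {τ : Type*} [DecidableEq τ] (s : Finset τ) (F : τ → ℝ) :
    E (∏ i ∈ s, F i) = ∑ i ∈ s, (∏ j ∈ s.erase i, (F j) ^ 2) * E (F i) := by
  induction s using Finset.induction_on with
  | empty => simp
  | @insert a s ha ih =>
    rw [Finset.prod_insert ha, E_mul, ih, Finset.sum_insert ha, Finset.erase_insert ha,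
      Finset.mul_sum, ← Finset.prod_pow, add_comm]
    congr 1
    refine Finset.sum_congr rfl fun i hi => ?_
    rw [Finset.erase_insert_of_ne (by rintro rfl; exact ha hi),
      Finset.prod_insert (fun h => ha (Finset.mem_of_mem_erase h))]
    ring

lemma fourierEntropy_eq (f : (ι → Bool) → Bool) :
    fourierEntropy f = ∑ α : ι → Bool, E (walsh f α) := by
  unfold fourierEntropy
  refine Finset.sum_congr rfl fun α _ => ?_
  by_cases h : walsh f α = 0 <;> simp [h, E]

lemma entropy_comp (f : (ι → Bool) → Bool) (g : (κ → Bool) → Bool)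
    (hg0 : walsh g (fun _ => false) = 0) :
    fourierEntropy (disjComp f g) = fourierEntropy f + fourierEntropy g * influence f := by
  classical
  set z0 : κ → Bool := fun _ => false with hz0
  set Sset : Bool → Finset (κ → Bool) :=
    fun b => Finset.univ.filter fun v => (decide ¬(v = z0)) = b with hSset
  have hStrue : Sset true = Finset.univ.erase z0 := by
    ext v
    simp [hSset, Finset.mem_erase]
  have hSfalse : Sset false = {z0} := by
    ext v
    simp [hSset]
  have hF1 : ∀ b : Bool, ∑ v ∈ Sset b, (wfac g v) ^ 2 = 1 := by
    intro b
    cases b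
    · rw [hSfalse, Finset.sum_singleton]
      simp [wfac, hz0]
    · rw [hStrue]
      have h1 : ∑ v ∈ Finset.univ.erase z0, (wfac g v) ^ 2
          = ∑ v ∈ Finset.univ.erase z0, (walsh g v) ^ 2 := by
        refine Finset.sum_congr rfl fun v hv => ?_
        rw [wfac, if_neg (Finset.mem_erase.mp hv).1]
      have h2 := Finset.add_sum_erase Finset.univ (fun v => (walsh g v) ^ 2)
        (Finset.mem_univ z0)
      rw [walsh_parseval g] at h2
      simp only [hg0, ne_eq, zero_pow, OfNat.ofNat_ne_zero, not_false_eq_true,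
        zero_add] at h2
      rw [h1]
      exact h2
  have hF3 : ∑ v ∈ Sset true, E (wfac g v) = fourierEntropy g := by
    rw [hStrue]
    have h1 : ∑ v ∈ Finset.univ.erase z0, E (wfac g v)
        = ∑ v ∈ Finset.univ.erase z0, E (walsh g v) := by
      refine Finset.sum_congr rfl fun v hv => ?_
      rw [wfac, if_neg (Finset.mem_erase.mp hv).1]
    have h2 := Finset.add_sum_erase Finset.univ (fun v => E (walsh g v))
      (Finset.mem_univ z0)
    simp only [hg0, E_zero, zero_add] at h2
    rw [fourierEntropy_eq g, h1, h2]
  have hF4 : ∑ v ∈ Sset false, E (wfac g v) = 0 := by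
    rw [hSfalse, Finset.sum_singleton]
    simp [wfac, hz0]
  set pb : (ι → κ → Bool) → (ι → Bool) := fun a i => decide ¬(a i = z0) with hpb
  have hfiber : ∀ F : (ι → κ → Bool) → ℝ,
      ∑ a : ι → κ → Bool, F a
        = ∑ β : ι → Bool, ∑ a ∈ Fintype.piFinset (fun i => Sset (β i)), F a := by
    intro F
    rw [← Finset.sum_fiberwise_of_maps_to (g := pb)
      (fun a _ => Finset.mem_univ (pb a)) F]
    refine Finset.sum_congr rfl fun β _ => Finset.sum_congr ?_ (fun _ _ => rfl)
    ext a
    simp only [Finset.mem_filter, Finset.mem_univ, true_and, Fintype.mem_piFinset,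
      hSset, hpb, funext_iff]
  have hmem : ∀ (β : ι → Bool) (a : ι → κ → Bool),
      a ∈ Fintype.piFinset (fun i => Sset (β i)) → pb a = β := by
    intro β a ha
    funext i
    have := Fintype.mem_piFinset.mp ha i
    simp only [hSset, Finset.mem_filter] at this
    exact this.2
  have step1 : fourierEntropy (disjComp f g)
      = ∑ a : ι → κ → Bool, E (walsh f (pb a) * ∏ i, wfac g (a i)) := by
    rw [fourierEntropy_eq]
    refine Fintype.sum_equiv (Equiv.curry ι κ Bool) _ _ (fun α => ?_)
    rw [walsh_disjComp f g hg0 α]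
    rfl
  have step2 : ∀ a : ι → κ → Bool,
      E (walsh f (pb a) * ∏ i, wfac g (a i))
        = (walsh f (pb a)) ^ 2 *
            ∑ i, (∏ j ∈ Finset.univ.erase i, (wfac g (a j)) ^ 2) * E (wfac g (a i))
          + (∏ i, (wfac g (a i)) ^ 2) * E (walsh f (pb a)) := by
    intro a
    rw [E_mul, E_prod Finset.univ (fun i => wfac g (a i)), ← Finset.prod_pow]
  rw [step1, Finset.sum_congr rfl fun a _ => step2 a, Finset.sum_add_distrib]
  have hS1 : ∑ a : ι → κ → Bool, (∏ i, (wfac g (a i)) ^ 2) * E (walsh f (pb a))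
      = fourierEntropy f := by
    rw [hfiber, fourierEntropy_eq]
    refine Finset.sum_congr rfl fun β _ => ?_
    have : ∀ a ∈ Fintype.piFinset (fun i => Sset (β i)),
        (∏ i, (wfac g (a i)) ^ 2) * E (walsh f (pb a))
          = (∏ i, (wfac g (a i)) ^ 2) * E (walsh f β) := by
      intro a ha
      rw [hmem β a ha]
    rw [Finset.sum_congr rfl this, ← Finset.sum_mul,
      ← Finset.prod_univ_sum (fun i => Sset (β i)) (fun _ v => (wfac g v) ^ 2)]
    rw [Finset.prod_congr rfl fun i _ => hF1 (β i)]
    simp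
  have hS2 : ∑ a : ι → κ → Bool, (walsh f (pb a)) ^ 2 *
        ∑ i, (∏ j ∈ Finset.univ.erase i, (wfac g (a j)) ^ 2) * E (wfac g (a i))
      = fourierEntropy g * influence f := by
    rw [hfiber]
    have hβ : ∀ β : ι → Bool,
        ∑ a ∈ Fintype.piFinset (fun i => Sset (β i)), (walsh f (pb a)) ^ 2 *
          ∑ i, (∏ j ∈ Finset.univ.erase i, (wfac g (a j)) ^ 2) * E (wfac g (a i))
        = (walsh f β) ^ 2 * ((bwt β : ℝ) * fourierEntropy g) := by
      intro β
      have h1 : ∀ a ∈ Fintype.piFinset (fun i => Sset (β i)),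
          (walsh f (pb a)) ^ 2 *
            ∑ i, (∏ j ∈ Finset.univ.erase i, (wfac g (a j)) ^ 2) * E (wfac g (a i))
          = (walsh f β) ^ 2 *
            ∑ i, (∏ j ∈ Finset.univ.erase i, (wfac g (a j)) ^ 2) * E (wfac g (a i)) := by
        intro a ha
        rw [hmem β a ha]
      rw [Finset.sum_congr rfl h1, ← Finset.mul_sum]
      congr 1
      rw [Finset.sum_comm]
      have h2 : ∀ i : ι,
          ∑ a ∈ Fintype.piFinset (fun i => Sset (β i)),
            (∏ j ∈ Finset.univ.erase i, (wfac g (a j)) ^ 2) * E (wfac g (a i))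
          = if β i = true then fourierEntropy g else 0 := by
        intro i
        have h3 : ∀ a : ι → κ → Bool,
            (∏ j ∈ Finset.univ.erase i, (wfac g (a j)) ^ 2) * E (wfac g (a i))
            = ∏ j, (if j = i then E (wfac g (a j)) else (wfac g (a j)) ^ 2) := by
          intro a
          rw [← Finset.mul_prod_erase Finset.univ _ (Finset.mem_univ i), if_pos rfl]
          rw [Finset.prod_congr rfl fun j hj =>
            if_neg (Finset.mem_erase.mp hj).1]
          ring
        rw [Finset.sum_congr rfl fun a _ => h3 a,
          ← Finset.prod_univ_sum (fun j => Sset (β j))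
            (fun j v => if j = i then E (wfac g v) else (wfac g v) ^ 2)]
        rw [← Finset.mul_prod_erase Finset.univ _ (Finset.mem_univ i)]
        have h4 : ∏ j ∈ Finset.univ.erase i,
            (∑ v ∈ Sset (β j), if j = i then E (wfac g v) else (wfac g v) ^ 2) = 1 := by
          refine Finset.prod_eq_one fun j hj => ?_
          rw [Finset.sum_congr rfl fun v _ => if_neg (Finset.mem_erase.mp hj).1]
          exact hF1 (β j)
        rw [h4, mul_one, Finset.sum_congr rfl fun v _ => if_pos rfl]
        cases hb : β i
        · rw [hF4]; simp
        · rw [hF3]; simp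
      rw [Finset.sum_congr rfl fun i _ => h2 i, Finset.sum_ite, Finset.sum_const,
        Finset.sum_const_zero, add_zero, nsmul_eq_mul]
      norm_num [bwt]
    rw [Finset.sum_congr rfl fun β _ => hβ β, influence_eq f, Finset.mul_sum]
    refine Finset.sum_congr rfl fun β _ => by ring
  rw [hS1, hS2]
  ring

end Comp

end S18


/-- Fourier entropy of a disjoint composition with balanced inner function:
`H(f ⋄ g) = H(f) + H(g)·Inf(f)`. -/
theorem stmt18 {k l : ℕ} (hk : 0 < k) (hl : 0 < l)
    (f : (Fin k → Bool) → Bool) (g : (Fin l → Bool) → Bool) (hg : balanced g) :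
    fourierEntropy (disjComp f g) = fourierEntropy f + fourierEntropy g * influence f := by
  have hg0 : walsh g (fun _ => false) = 0 :=
    S18.walsh_zero_of_balanced g hg (by simpa using hl)
  exact S18.entropy_comp f g hg0
end
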